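/- arXiv:1503.08574 — 8 statements merged into one kernel-verified Lean document; each statement's English description precedes it below -/
import Mathlib

section
/- Let X be a separable F-space and let (T_a)_{a∈ℝ^d} be a strongly continuous operator group on X with the uniform mixing property. Then the set ⋂_{a∈ℝ^d∖{0}} HC(T_a) of common hypercyclic vectors is a residual (comeagre) subset of X. -/
/-!
By a Banach–Steinhaus argument in the Baire space `X`, the action `(a, x) ↦ T a x` is jointly
continuous; so for `y₀ ∈ V` there are `δ > 0` and an open `W ∋ y₀` with `T c y ∈ V` whenever
`‖c‖ < δ` and `y ∈ W`. Fix a compact `K ∌ 0`. Dirichlet's simultaneous approximation gives each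
`a ∈ K` a multiple `n • a` within `δ` of a point `b` of the lattice `C ℤ^d` with `‖b‖ ≥ C`, and by
compactness finitely many such `b` serve all of `K`. Distinct lattice points are `C`-separated,
so uniform mixing makes the open set `⋂_b (T b)⁻¹' W` meet every nonempty open set; on it each
`a ∈ K` has `T (n • a) x = T (n • a - b) (T b x) ∈ V`. Intersecting over countably many annuli
`K` and a countable basis of `V`'s yields a dense `G_δ` of common hypercyclic vectors.
-/

open Set Filter Topology Metric

theorem ContinuousLinearMap.eventually_forall_apply_mem_of_isVonNBounded
    {ι X Y : Type*} [AddCommGroup X] [Module ℝ X] [TopologicalSpace X] [BaireSpace X]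
    [ContinuousAdd X] [ContinuousConstSMul ℝ X]
    [AddCommGroup Y] [Module ℝ Y] [TopologicalSpace Y] [IsTopologicalAddGroup Y]
    (f : ι → X →L[ℝ] Y) (hf : ∀ x, Bornology.IsVonNBounded ℝ (range fun i => f i x))
    {W : Set Y} (hW : W ∈ 𝓝 0) : ∀ᶠ v in 𝓝 0, ∀ i, f i v ∈ W := by
  obtain ⟨W', hW'0, hW'c, hW'neg, hW'W⟩ := exists_closed_nhds_zero_neg_eq_add_subset hW
  -- Scaling inside `f i` lets `W'` be any closed neighbourhood; no balancedness is needed.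
  set F : ℕ → Set X := fun n => ⋂ i, {y | f i (((n : ℝ) + 1)⁻¹ • y) ∈ W'}
  have hF_closed (n : ℕ) : IsClosed (F n) :=
    isClosed_iInter fun i => hW'c.preimage ((f i).continuous.comp (continuous_const_smul _))
  have hF_cover : ⋃ n, F n = univ := by
    refine eq_univ_of_forall fun y => mem_iUnion.2 ?_
    obtain ⟨r, hr⟩ := absorbs_iff_norm.1 (hf y hW'0)
    obtain ⟨n, hn⟩ := exists_nat_ge r
    refine ⟨n, mem_iInter.2 fun i => ?_⟩
    have hpos : (0 : ℝ) < n + 1 := by positivity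
    obtain ⟨w, hw, hwy⟩ := hr ((n : ℝ) + 1) (by rw [Real.norm_of_nonneg hpos.le]; linarith)
      (mem_range_self i)
    simpa [map_smul, ← hwy, smul_smul, hpos.ne'] using hw
  obtain ⟨n, y₁, hy₁⟩ := nonempty_interior_of_iUnion_of_closed hF_closed hF_cover
  have hpos : (0 : ℝ) < n + 1 := by positivity
  have hnear : ∀ᶠ v in 𝓝 (0 : X), y₁ + ((n : ℝ) + 1) • v ∈ F n := by
    have hcont : Continuous fun v : X => y₁ + ((n : ℝ) + 1) • v :=
      continuous_const.add (continuous_const_smul _)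
    have := hcont.tendsto 0
    simp only [smul_zero, add_zero] at this
    exact this (mem_interior_iff_mem_nhds.1 hy₁)
  filter_upwards [hnear] with v hv i
  have h₁ := mem_iInter.1 hv i
  have h₂ := mem_iInter.1 (interior_subset hy₁) i
  have hdecomp : f i v = f i (((n : ℝ) + 1)⁻¹ • (y₁ + ((n : ℝ) + 1) • v))
      + -f i (((n : ℝ) + 1)⁻¹ • y₁) := by
    rw [smul_add, smul_smul, inv_mul_cancel₀ hpos.ne', one_smul, map_add]
    abel
  rw [hdecomp]
  refine hW'W (add_mem_add h₁ ?_)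
  rw [← hW'neg]
  exact neg_mem_neg.2 h₂

theorem ContinuousLinearMap.continuous_uncurry_of_baireSpace
    {E X Y : Type*} [TopologicalSpace E] [WeaklyLocallyCompactSpace E]
    [AddCommGroup X] [Module ℝ X] [TopologicalSpace X] [BaireSpace X]
    [IsTopologicalAddGroup X] [ContinuousConstSMul ℝ X]
    [AddCommGroup Y] [Module ℝ Y] [TopologicalSpace Y] [IsTopologicalAddGroup Y]
    [ContinuousSMul ℝ Y]
    (T : E → X →L[ℝ] Y) (hT : ∀ x, Continuous fun c => T c x) :
    Continuous fun p : E × X => T p.1 p.2 := by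
  refine continuous_iff_continuousAt.2 fun ⟨c₀, y₀⟩ => ?_
  obtain ⟨K, hK, hKc₀⟩ := exists_compact_mem_nhds c₀
  have hequi : Tendsto (fun p : E × X => T p.1 (p.2 - y₀)) (𝓝 (c₀, y₀)) (𝓝 0) := by
    intro W hW
    have hbdd (x : X) : Bornology.IsVonNBounded ℝ (range fun c : K => T c x) := by
      simpa only [image_eq_range] using (hK.image (hT x)).isVonNBounded ℝ
    have hsmall := eventually_forall_apply_mem_of_isVonNBounded (fun c : K => T c) hbdd hW
    have hsub : Tendsto (fun p : E × X => p.2 - y₀) (𝓝 (c₀, y₀)) (𝓝 0) :=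
      tendsto_sub_nhds_zero_iff.2 continuousAt_snd
    rw [mem_map]
    filter_upwards [continuousAt_fst.eventually_mem hKc₀, hsub.eventually hsmall] with p hpK hp
    exact hp ⟨p.1, hpK⟩
  have hsum := hequi.add (((hT y₀).tendsto c₀).comp continuousAt_fst)
  simp only [zero_add, Function.comp_def, ← map_add, sub_add_cancel] at hsum
  exact hsum

theorem exists_forall_norm_lt_forall_mem_apply_mem {E X : Type*} [SeminormedAddCommGroup E]
    [WeaklyLocallyCompactSpace E] [AddCommGroup X] [Module ℝ X] [TopologicalSpace X]
    [BaireSpace X] [IsTopologicalAddGroup X] [ContinuousSMul ℝ X] {T : E → X →L[ℝ] X}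
    (hid : T 0 = ContinuousLinearMap.id ℝ X) (hsc : ∀ x, Continuous fun a => T a x)
    {V : Set X} (hV : IsOpen V) {y₀ : X} (hy₀ : y₀ ∈ V) :
    ∃ δ > 0, ∃ W, IsOpen W ∧ y₀ ∈ W ∧ ∀ c : E, ‖c‖ < δ → ∀ y ∈ W, T c y ∈ V := by
  have hjoint : (fun p : E × X => T p.1 p.2) ⁻¹' V ∈ 𝓝 (0, y₀) :=
    (ContinuousLinearMap.continuous_uncurry_of_baireSpace T hsc).continuousAt.preimage_mem_nhds
      (by simpa [hid] using hV.mem_nhds hy₀)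
  obtain ⟨D, W, hD, hD0, hW, hy₀W, hDW⟩ := mem_nhds_prod_iff'.1 hjoint
  obtain ⟨δ, hδ, hballD⟩ := Metric.isOpen_iff.1 hD 0 hD0
  exact ⟨δ, hδ, W, hW, hy₀W, fun c hc y hy =>
    hDW (mk_mem_prod (hballD (mem_ball_zero_iff.2 hc)) hy)⟩

theorem IsCompact.exists_lt_dist_lt {α : Type*} [PseudoMetricSpace α] {s : Set α}
    (hs : IsCompact s) {u : ℕ → α} (hu : ∀ n, u n ∈ s) {ε : ℝ} (hε : 0 < ε) :
    ∃ m n, m < n ∧ dist (u m) (u n) < ε := by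
  obtain ⟨_, -, φ, hφ, hlim⟩ := hs.tendsto_subseq hu
  obtain ⟨N, hN⟩ := Metric.cauchySeq_iff'.1 hlim.cauchySeq ε hε
  exact ⟨φ N, φ (N + 1), hφ N.lt_succ_self, dist_comm (u (φ N)) _ ▸ hN (N + 1) N.le_succ⟩

section Lattice

variable {ι : Type*}

def cubicLattice (C : ℝ) : AddSubgroup (EuclideanSpace ℝ ι) where
  carrier := {b | ∀ i, ∃ z : ℤ, b i = C * z}
  zero_mem' i := ⟨0, by simp⟩
  add_mem' {b b'} hb hb' i := by
    obtain ⟨z, hz⟩ := hb i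
    obtain ⟨z', hz'⟩ := hb' i
    exact ⟨z + z', by simp [hz, hz', mul_add]⟩
  neg_mem' {b} hb i := by
    obtain ⟨z, hz⟩ := hb i
    exact ⟨-z, by simp [hz]⟩

variable [Fintype ι]

theorem le_norm_of_mem_cubicLattice {C : ℝ} (hC : 0 ≤ C) {b : EuclideanSpace ℝ ι}
    (hb : b ∈ cubicLattice C) (hb0 : b ≠ 0) : C ≤ ‖b‖ := by
  obtain ⟨i, hi⟩ : ∃ i, b i ≠ 0 := by
    by_contra! h
    exact hb0 (PiLp.ext h)
  obtain ⟨z, hz⟩ := hb i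
  have hz0 : z ≠ 0 := by rintro rfl; simp [hz] at hi
  calc C = C * 1 := (mul_one C).symm
    _ ≤ C * |(z : ℝ)| := by gcongr; exact_mod_cast Int.one_le_abs hz0
    _ = ‖b i‖ := by rw [hz, Real.norm_eq_abs, abs_mul, abs_of_nonneg hC]
    _ ≤ ‖b‖ := PiLp.norm_apply_le b i

/-- Dirichlet's simultaneous approximation theorem. -/
theorem exists_pos_nsmul_norm_sub_lt_cubicLattice {C δ : ℝ} (hC : 0 < C) (hδ : 0 < δ)
    (v : EuclideanSpace ℝ ι) : ∃ k : ℕ, 0 < k ∧ ∃ b ∈ cubicLattice C, ‖k • v - b‖ < δ := by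
  let floorPoint (n : ℕ) : EuclideanSpace ℝ ι := WithLp.toLp 2 fun i => C * ⌊(n • v) i / C⌋
  have hfloor (n : ℕ) : floorPoint n ∈ cubicLattice C := fun i => ⟨_, rfl⟩
  let box : Set (EuclideanSpace ℝ ι) := WithLp.toLp 2 '' univ.pi fun _ => Icc 0 C
  have hbox (n : ℕ) : n • v - floorPoint n ∈ box := by
    refine ⟨WithLp.ofLp (n • v - floorPoint n), fun i _ => ?_, rfl⟩
    have hfract : (n • v) i - C * ⌊(n • v) i / C⌋ = C * Int.fract ((n • v) i / C) := by
      rw [Int.fract, mul_sub, mul_div_cancel₀ _ hC.ne']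
    simp only [PiLp.sub_apply, floorPoint, hfract]
    exact ⟨mul_nonneg hC.le (Int.fract_nonneg _),
      mul_le_of_le_one_right hC.le (Int.fract_lt_one _).le⟩
  have hcompact : IsCompact box :=
    (isCompact_univ_pi fun _ => isCompact_Icc).image (PiLp.continuous_toLp 2 _)
  obtain ⟨m, n, hmn, hdist⟩ := hcompact.exists_lt_dist_lt hbox hδ
  refine ⟨n - m, Nat.sub_pos_of_lt hmn, floorPoint n - floorPoint m,
    sub_mem (hfloor n) (hfloor m), ?_⟩
  have hdiff : (n - m) • v - (floorPoint n - floorPoint m)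
      = (n • v - floorPoint n) - (m • v - floorPoint m) := by
    rw [sub_nsmul v hmn.le]
    abel
  rwa [hdiff, ← dist_eq_norm, dist_comm]

theorem exists_pos_nsmul_norm_sub_lt_cubicLattice_of_ne_zero {C δ : ℝ}
    (hC : 0 < C) (hδ : 0 < δ) {a : EuclideanSpace ℝ ι} (ha : a ≠ 0) :
    ∃ n : ℕ, 0 < n ∧ ∃ b ∈ cubicLattice C, C ≤ ‖b‖ ∧ ‖n • a - b‖ < δ := by
  have hna : 0 < ‖a‖ := norm_pos_iff.2 ha
  obtain ⟨N, hN⟩ := exists_nat_ge ((C + δ) / ‖a‖)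
  have hN' : C + δ ≤ N * ‖a‖ := (div_le_iff₀ hna).1 hN
  have hNpos : 0 < N := by
    have : (0 : ℝ) < N := lt_of_lt_of_le (by positivity) hN
    exact_mod_cast this
  obtain ⟨k, hk, b, hb, hkb⟩ := exists_pos_nsmul_norm_sub_lt_cubicLattice hC hδ (N • a)
  rw [smul_smul] at hkb
  refine ⟨k * N, Nat.mul_pos hk hNpos, b, hb, ?_, hkb⟩
  have hnorm : N * ‖a‖ ≤ ‖(k * N) • a‖ := by
    rw [← Nat.cast_smul_eq_nsmul ℝ, norm_smul, Real.norm_natCast, Nat.cast_mul]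
    have : (1 : ℝ) ≤ k := by exact_mod_cast hk
    nlinarith
  linarith [norm_sub_norm_le ((k * N) • a) b]

end Lattice

def UniformlyMixing {E X : Type*} [SeminormedAddCommGroup E] [TopologicalSpace X]
    (T : E → X → X) : Prop :=
  ∀ U V : Set X, IsOpen U → IsOpen V → U.Nonempty → V.Nonempty →
    ∃ C > (0:ℝ), ∀ p : ℕ, 1 ≤ p → ∀ a : Fin p → E,
      (∀ i, C ≤ ‖a i‖) → (∀ i j, i ≠ j → C ≤ ‖a i - a j‖) → ∃ f ∈ U, ∀ j, T (a j) f ∈ V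

theorem UniformlyMixing.exists_forall_finset {E X : Type*} [SeminormedAddCommGroup E]
    [TopologicalSpace X] {T : E → X → X} (hT : UniformlyMixing T) {U V : Set X}
    (hU : IsOpen U) (hV : IsOpen V) (hUne : U.Nonempty) (hVne : V.Nonempty) :
    ∃ C > (0:ℝ), ∀ B : Finset E, (∀ b ∈ B, C ≤ ‖b‖) →
      (B : Set E).Pairwise (fun b b' => C ≤ ‖b - b'‖) → ∃ f ∈ U, ∀ b ∈ B, T b f ∈ V := by
  obtain ⟨C, hC, hmix⟩ := hT U V hU hV hUne hVne
  refine ⟨C, hC, fun B hnorm hsep => ?_⟩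
  rcases B.eq_empty_or_nonempty with rfl | hBne
  · obtain ⟨f, hf⟩ := hUne
    exact ⟨f, hf, by simp⟩
  let a (j : Fin B.card) : E := B.equivFin.symm j
  obtain ⟨f, hfU, hfV⟩ := hmix B.card hBne.card_pos a (fun j => hnorm _ (B.equivFin.symm j).2)
    fun i j hij => hsep (B.equivFin.symm i).2 (B.equivFin.symm j).2
      (fun h => hij (B.equivFin.symm.injective (Subtype.ext h)))
  refine ⟨f, hfU, fun b hb => ?_⟩
  simpa [a] using hfV (B.equivFin ⟨b, hb⟩)

theorem pow_eq_apply_nsmul {M R : Type*} [AddMonoid M] [Monoid R] {T : M → R} (h0 : T 0 = 1)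
    (hadd : ∀ a b, T (a + b) = T a * T b) (a : M) (n : ℕ) : T a ^ n = T (n • a) := by
  induction n with
  | zero => rw [pow_zero, zero_nsmul, h0]
  | succ n ih => rw [pow_succ, ih, succ_nsmul, hadd]

theorem exists_nat_mem_closedBall_diff_ball {E : Type*} [NormedAddCommGroup E] {a : E}
    (ha : a ≠ 0) : ∃ m : ℕ, a ∈ closedBall 0 (m + 1) \ ball 0 (m + 1)⁻¹ := by
  have hpos : 0 < ‖a‖ := norm_pos_iff.2 ha
  obtain ⟨m, hm⟩ := exists_nat_ge (max ‖a‖ ‖a‖⁻¹)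
  refine ⟨m, mem_closedBall_zero_iff.2 ?_, fun h => (mem_ball_zero_iff.1 h).not_ge ?_⟩
  · linarith [le_max_left ‖a‖ ‖a‖⁻¹]
  · exact inv_le_of_inv_le₀ hpos (by linarith [le_max_right ‖a‖ ‖a‖⁻¹])

theorem residual_setOf_forall_exists_nsmul_mem {ι X : Type*} [Fintype ι]
    [AddCommGroup X] [Module ℝ X] [TopologicalSpace X] [BaireSpace X]
    [IsTopologicalAddGroup X] [ContinuousSMul ℝ X] {T : EuclideanSpace ℝ ι → X →L[ℝ] X}
    (hid : T 0 = ContinuousLinearMap.id ℝ X) (hadd : ∀ a b, T (a + b) = (T a).comp (T b))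
    (hsc : ∀ x, Continuous fun a => T a x) (hmix : UniformlyMixing fun a => ⇑(T a))
    {K : Set (EuclideanSpace ℝ ι)} (hK : IsCompact K) (hK0 : 0 ∉ K)
    {V : Set X} (hV : IsOpen V) (hVne : V.Nonempty) :
    {x | ∀ a ∈ K, ∃ n : ℕ, 0 < n ∧ T (n • a) x ∈ V} ∈ residual X := by
  set A := {x | ∀ a ∈ K, ∃ n : ℕ, 0 < n ∧ T (n • a) x ∈ V}
  suffices Dense (interior A) from
    mem_of_superset (residual_of_dense_open isOpen_interior this) interior_subset
  refine dense_iff_inter_open.2 fun U hU hUne => ?_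
  obtain ⟨y₀, hy₀⟩ := hVne
  obtain ⟨δ, hδ, W, hW, hy₀W, hδW⟩ := exists_forall_norm_lt_forall_mem_apply_mem hid hsc hV hy₀
  obtain ⟨C, hC, hmixC⟩ := hmix.exists_forall_finset hU hW hUne ⟨y₀, hy₀W⟩
  have happrox (a) (ha : a ∈ K) :
      ∃ n : ℕ, 0 < n ∧ ∃ b ∈ cubicLattice C, C ≤ ‖b‖ ∧ ‖n • a - b‖ < δ :=
    exists_pos_nsmul_norm_sub_lt_cubicLattice_of_ne_zero hC hδ (ne_of_mem_of_not_mem ha hK0)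
  choose! n hn b hbL hbC hnb using happrox
  obtain ⟨t, htK, hcover⟩ := hK.elim_nhds_subcover (fun a => {a' | ‖n a • a' - b a‖ < δ})
    fun a ha => (isOpen_lt ((continuous_const_smul _).sub continuous_const).norm
      continuous_const).mem_nhds (hnb a ha)
  obtain ⟨f, hfU, hfW⟩ := hmixC (t.image b)
    (by simpa using fun a ha => hbC a (htK a ha))
    (by
      simp only [Finset.coe_image]
      rintro _ ⟨a, ha, rfl⟩ _ ⟨a', ha', rfl⟩ hne
      exact le_norm_of_mem_cubicLattice hC.le
        (sub_mem (hbL a (htK a ha)) (hbL a' (htK a' ha'))) (sub_ne_zero.2 hne))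
  let O := ⋂ c ∈ t.image b, T c ⁻¹' W
  have hO : IsOpen O := isOpen_biInter_finset fun c _ => hW.preimage (T c).continuous
  have hOA : O ⊆ A := by
    intro x hx a ha
    obtain ⟨a', ha't, ha⟩ := mem_iUnion₂.1 (hcover ha)
    refine ⟨n a', hn a' (htK a' ha't), ?_⟩
    have hsplit : T (n a' • a) x = T (n a' • a - b a') (T (b a') x) := by
      rw [← ContinuousLinearMap.comp_apply, ← hadd, sub_add_cancel]
    rw [hsplit]
    exact hδW _ ha _ (mem_iInter₂.1 hx _ (Finset.mem_image_of_mem b ha't))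
  exact ⟨f, hfU, interior_maximal hOA hO (mem_iInter₂.2 hfW)⟩

theorem stmt_0_general {X : Type*} [AddCommGroup X] [Module ℝ X] [MetricSpace X]
    [CompleteSpace X] [TopologicalSpace.SeparableSpace X]
    [IsTopologicalAddGroup X] [ContinuousSMul ℝ X]
    {d : ℕ} (T : EuclideanSpace ℝ (Fin d) → X →L[ℝ] X)
    (hid : T 0 = ContinuousLinearMap.id ℝ X)
    (hadd : ∀ a b, T (a + b) = (T a).comp (T b))
    (hsc : ∀ x : X, Continuous fun a => T a x)
    (hmix : ∀ U V : Set X, IsOpen U → IsOpen V → U.Nonempty → V.Nonempty →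
      ∃ C > (0:ℝ), ∀ p : ℕ, 1 ≤ p → ∀ a : Fin p → EuclideanSpace ℝ (Fin d),
        (∀ i, C ≤ ‖a i‖) → (∀ i j, i ≠ j → C ≤ ‖a i - a j‖) →
        ∃ f ∈ U, ∀ j, T (a j) f ∈ V) :
    (⋂ a ∈ {a : EuclideanSpace ℝ (Fin d) | a ≠ 0},
      {x : X | Dense (Set.range fun n : ℕ => ((T a) ^ (n + 1)) x)}) ∈ residual X := by
  obtain ⟨bs, hbc, hbne, hbasis⟩ := TopologicalSpace.exists_countable_basis X
  let K (m : ℕ) : Set (EuclideanSpace ℝ (Fin d)) := closedBall 0 (m + 1) \ ball 0 (m + 1)⁻¹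
  have hres : (⋂ m, ⋂ V ∈ bs, {x | ∀ a ∈ K m, ∃ n : ℕ, 0 < n ∧ T (n • a) x ∈ V}) ∈ residual X :=
    countable_iInter_mem.2 fun m => (countable_bInter_mem hbc).2 fun V hV =>
      residual_setOf_forall_exists_nsmul_mem hid hadd hsc hmix
        ((isCompact_closedBall _ _).diff isOpen_ball)
        (fun h => h.2 (mem_ball_self (by positivity)))
        (hbasis.isOpen hV) (nonempty_iff_ne_empty.2 (ne_of_mem_of_not_mem hV hbne))
  refine mem_of_superset hres fun x hx => mem_iInter₂.2 fun a ha => ?_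
  obtain ⟨m, ham⟩ := exists_nat_mem_closedBall_diff_ball ha
  refine hbasis.dense_iff.2 fun V hV _ => ?_
  obtain ⟨n, hn, hnV⟩ := mem_iInter₂.1 (mem_iInter.1 hx m) V hV a ham
  refine ⟨_, hnV, n - 1, ?_⟩
  show (T a ^ (n - 1 + 1)) x = _
  rw [Nat.sub_add_cancel hn, pow_eq_apply_nsmul hid hadd]

/-- If `(T_a)_{a ∈ ℝ^d}` is a strongly continuous operator group on a
separable F-space `X` with the uniform mixing property, then
`⋂_{a ≠ 0} HC(T_a)` is residual (comeagre) in `X`. -/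
theorem stmt_0 {X : Type*} [AddCommGroup X] [Module ℝ X] [MetricSpace X]
    [CompleteSpace X] [TopologicalSpace.SeparableSpace X]
    [IsTopologicalAddGroup X] [ContinuousSMul ℝ X]
    (hinv : ∀ x y z : X, dist (x + z) (y + z) = dist x y)
    {d : ℕ} (T : EuclideanSpace ℝ (Fin d) → X →L[ℝ] X)
    (hid : T 0 = ContinuousLinearMap.id ℝ X)
    (hadd : ∀ a b, T (a + b) = (T a).comp (T b))
    (hsc : ∀ x : X, Continuous fun a => T a x)
    (hmix : ∀ U V : Set X, IsOpen U → IsOpen V → U.Nonempty → V.Nonempty →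
      ∃ C > (0:ℝ), ∀ p : ℕ, 1 ≤ p → ∀ a : Fin p → EuclideanSpace ℝ (Fin d),
        (∀ i, C ≤ ‖a i‖) → (∀ i j, i ≠ j → C ≤ ‖a i - a j‖) →
        ∃ f ∈ U, ∀ j, T (a j) f ∈ V) :
    (⋂ a ∈ {a : EuclideanSpace ℝ (Fin d) | a ≠ 0},
      {x : X | Dense (Set.range fun n : ℕ => ((T a) ^ (n + 1)) x)}) ∈ residual X :=
  stmt_0_general T hid hadd hsc hmix
end

section
/- Let (λ_n) be an increasing sequence of positive real numbers tending to +∞ such that λ_{n+1}/λ_n → 1 as n → ∞. Then (λ_n) has property (SG). -/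
/-!
Given `B`, take `ρ = √(1 + 1/(2B))`. Eventually `λ_{m+1} ≤ ρ λ_m`, so if each next index is the
first one at which `λ` has grown by the factor `ρ`, it overshoots by at most one more step, and the
subsequence satisfies `ρ μ_n ≤ μ_{n+1} ≤ ρ² μ_n`. The lower bound makes `∑ 1/μ_n` converge; the
upper bound gives `μ_{n₀+k} ≤ ρ^{2k} μ_{n₀}`, whence the tail after `n₀` is at least
`1/((ρ² - 1) μ_{n₀}) = 2B/μ_{n₀}`.
-/

open Filter

lemma summable_inv_of_mul_le {μ : ℕ → ℝ} {ρ : ℝ} (hρ : 1 < ρ) (hpos : ∀ n, 0 < μ n)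
    (hgrow : ∀ n, ρ * μ n ≤ μ (n + 1)) : Summable fun n => (μ n)⁻¹ := by
  refine summable_of_ratio_norm_eventually_le (inv_lt_one_of_one_lt₀ hρ)
    (Eventually.of_forall fun n => ?_)
  have hρμ : 0 < ρ * μ n := mul_pos (zero_lt_one.trans hρ) (hpos n)
  rw [Real.norm_of_nonneg (inv_pos.mpr (hpos _)).le, Real.norm_of_nonneg (inv_pos.mpr (hpos _)).le,
    ← mul_inv]
  exact inv_anti₀ hρμ (hgrow n)

lemma inv_mul_le_tsum_inv_tail {μ : ℕ → ℝ} {s : ℝ} (hs : 1 < s) (hpos : ∀ n, 0 < μ n)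
    (hle : ∀ n, μ (n + 1) ≤ s * μ n) (hsum : Summable fun n => (μ n)⁻¹) (n₀ : ℕ) :
    ((s - 1) * μ n₀)⁻¹ ≤ ∑' n : {m : ℕ // n₀ < m}, (μ n)⁻¹ := by
  have hs₀ : 0 < s := zero_lt_one.trans hs
  have hr : s⁻¹ < 1 := inv_lt_one_of_one_lt₀ hs
  have hbound : ∀ k, (μ n₀)⁻¹ * s⁻¹ * s⁻¹ ^ k ≤ (μ (n₀ + 1 + k))⁻¹ := fun k => by
    have hgeom : μ (n₀ + 1 + k) ≤ s ^ (k + 1) * μ n₀ := by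
      rw [add_assoc, add_comm 1 k]
      exact le_geom (u := fun j => μ (n₀ + j)) hs₀.le (k + 1) fun j _ => hle (n₀ + j)
    calc (μ n₀)⁻¹ * s⁻¹ * s⁻¹ ^ k = (s ^ (k + 1) * μ n₀)⁻¹ := by
          rw [pow_succ, mul_inv, mul_inv, inv_pow]; ring
      _ ≤ (μ (n₀ + 1 + k))⁻¹ := inv_anti₀ (hpos _) hgeom
  let shift : ℕ → {m : ℕ // n₀ < m} := fun k => ⟨n₀ + 1 + k, by omega⟩
  have hshift : Function.Injective shift := fun k l h => by
    simpa [shift] using congrArg Subtype.val h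
  calc ((s - 1) * μ n₀)⁻¹ = ∑' k : ℕ, (μ n₀)⁻¹ * s⁻¹ * s⁻¹ ^ k := by
        rw [tsum_mul_left, tsum_geometric_of_lt_one (inv_nonneg.mpr hs₀.le) hr]
        field_simp
    _ ≤ ∑' k : ℕ, (μ (n₀ + 1 + k))⁻¹ :=
        Summable.tsum_le_tsum hbound
          ((summable_geometric_of_lt_one (inv_nonneg.mpr hs₀.le) hr).mul_left _)
          (hsum.comp_injective (add_right_injective _))
    _ ≤ ∑' n : {m : ℕ // n₀ < m}, (μ n)⁻¹ :=
        tsum_comp_le_tsum_of_inj (hsum.comp_injective Subtype.val_injective)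
          (fun n => (inv_pos.mpr (hpos _)).le) hshift

lemma exists_gt_mul_le_le_sq_mul {μ : ℕ → ℝ} {ρ : ℝ} (hρ : 1 ≤ ρ) (hnonneg : ∀ n, 0 ≤ μ n)
    (hstep : ∀ n, μ (n + 1) ≤ ρ * μ n) (htop : Tendsto μ atTop atTop) (a : ℕ) :
    ∃ m, a < m ∧ ρ * μ a ≤ μ m ∧ μ m ≤ ρ ^ 2 * μ a := by
  have hex : ∃ k, ρ * μ a ≤ μ (a + 1 + k) := by
    obtain ⟨N, hN⟩ := eventually_atTop.mp (htop.eventually_ge_atTop (ρ * μ a))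
    exact ⟨N, hN _ (by omega)⟩
  refine ⟨a + 1 + Nat.find hex, by omega, Nat.find_spec hex, ?_⟩
  rcases hk : Nat.find hex with _ | j
  · have hρμ : ρ * μ a ≤ ρ * (ρ * μ a) :=
      le_mul_of_one_le_left (mul_nonneg (zero_le_one.trans hρ) (hnonneg a)) hρ
    calc μ (a + 1 + 0) ≤ ρ * μ a := hstep a
      _ ≤ ρ ^ 2 * μ a := by rw [sq, mul_assoc]; exact hρμ
  · have hmin : μ (a + 1 + j) < ρ * μ a := not_le.mp (Nat.find_min hex (by omega))
    calc μ (a + 1 + (j + 1)) ≤ ρ * μ (a + 1 + j) := hstep (a + 1 + j)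
      _ ≤ ρ * (ρ * μ a) := mul_le_mul_of_nonneg_left hmin.le (zero_le_one.trans hρ)
      _ = ρ ^ 2 * μ a := by ring

lemma exists_strictMono_mul_le_le_sq_mul {μ : ℕ → ℝ} {ρ : ℝ} (hρ : 1 ≤ ρ)
    (hnonneg : ∀ n, 0 ≤ μ n) (hstep : ∀ n, μ (n + 1) ≤ ρ * μ n) (htop : Tendsto μ atTop atTop) :
    ∃ φ : ℕ → ℕ, StrictMono φ ∧
      ∀ n, ρ * μ (φ n) ≤ μ (φ (n + 1)) ∧ μ (φ (n + 1)) ≤ ρ ^ 2 * μ (φ n) := by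
  choose next hnext using exists_gt_mul_le_le_sq_mul hρ hnonneg hstep htop
  refine ⟨fun n => next^[n] 0, strictMono_nat_of_lt_succ fun n => ?_, fun n => ?_⟩
  · simp only [Function.iterate_succ_apply']
    exact (hnext _).1
  · simp only [Function.iterate_succ_apply']
    exact (hnext _).2

theorem stmt_11_general (lam : ℕ → ℝ) (hpos : ∀ n, 0 < lam n)
    (htop : Filter.Tendsto lam Filter.atTop Filter.atTop)
    (hratio : Filter.Tendsto (fun n => lam (n + 1) / lam n) Filter.atTop (nhds 1)) :
    ∀ B : ℝ, 0 < B → ∃ ρ : ℝ, 1 < ρ ∧ ∃ φ : ℕ → ℕ, StrictMono φ ∧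
      (∀ n, ρ * lam (φ n) ≤ lam (φ (n + 1))) ∧
      ∀ n₀ : ℕ, B / lam (φ n₀) < ∑' n : {m : ℕ // n₀ < m}, (lam (φ n.1))⁻¹ := by
  intro B hB
  set ρ := √(1 + (2 * B)⁻¹)
  have hρ : 1 < ρ := (Real.lt_sqrt zero_le_one).mpr (by simpa using hB)
  have hρsq : ρ ^ 2 - 1 = (2 * B)⁻¹ := by
    rw [Real.sq_sqrt (by positivity)]
    ring
  obtain ⟨N, hN⟩ := eventually_atTop.mp (hratio.eventually_lt_const hρ)
  have hstep : ∀ m, lam (m + 1 + N) ≤ ρ * lam (m + N) := fun m => by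
    have h := hN (m + N) (by omega)
    rw [div_lt_iff₀ (hpos _)] at h
    rw [add_right_comm]
    exact h.le
  obtain ⟨φ, hφ, hφρ⟩ := exists_strictMono_mul_le_le_sq_mul hρ.le (fun n => (hpos _).le) hstep
    (htop.comp (tendsto_add_atTop_nat N))
  refine ⟨ρ, hρ, fun n => φ n + N, hφ.add_const N, fun n => (hφρ n).1, fun n₀ => ?_⟩
  have hsum := summable_inv_of_mul_le hρ (fun n => hpos _) fun n => (hφρ n).1
  calc B / lam (φ n₀ + N) < ((ρ ^ 2 - 1) * lam (φ n₀ + N))⁻¹ := by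
        rw [hρsq, mul_inv, inv_inv, ← div_eq_mul_inv]
        gcongr
        · exact hpos _
        · linarith
    _ ≤ _ := inv_mul_le_tsum_inv_tail (one_lt_pow₀ hρ two_ne_zero) (fun n => hpos _)
        (fun n => (hφρ n).2) hsum n₀

/-- an increasing sequence of positive reals tending to `+∞` with
`λ_{n+1}/λ_n → 1` has property (SG). -/
theorem stmt_11 (lam : ℕ → ℝ) (hpos : ∀ n, 0 < lam n) (hmono : StrictMono lam)
    (htop : Filter.Tendsto lam Filter.atTop Filter.atTop)
    (hratio : Filter.Tendsto (fun n => lam (n + 1) / lam n) Filter.atTop (nhds 1)) :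
    ∀ B : ℝ, 0 < B → ∃ ρ : ℝ, 1 < ρ ∧ ∃ φ : ℕ → ℕ, StrictMono φ ∧
      (∀ n, ρ * lam (φ n) ≤ lam (φ (n + 1))) ∧
      ∀ n₀ : ℕ, B / lam (φ n₀) < ∑' n : {m : ℕ // n₀ < m}, (lam (φ n.1))⁻¹ :=
  stmt_11_general lam hpos htop hratio
end

section
/- Let X be a separable F-space and let (T_a)_{a∈ℝ^d} be an operator group on X. Assume there exists a dense set D ⊆ X such that for any f ∈ D and any ε > 0, there exists C > 0 such that for any N ≥ 1 and any a_1, …, a_N ∈ ℝ^d with ‖a_i − a_j‖ ≥ C for all i ≠ j and ‖a_i‖ ≥ C for all i, one has ‖Σ_{i=1}^N T_{a_i} f‖ < ε. Then (T_a)_{a∈ℝ^d} has the uniform mixing property. -/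
/-!
Approximate `u ∈ U` and `v ∈ V` by `f, g ∈ D` and take `h = f + ∑ⱼ T_{-aⱼ} g`. The family
`(-aⱼ)` is separated and far from the origin, so the sum is small and `h` stays close to `f`.
Applying `T_{aₖ}` turns the `k`-th term into `g`, and what is left, `T_{aₖ} f` and
`∑_{j ≠ k} T_{aₖ - aⱼ} g`, are again sums over separated families far from the origin.
-/

section TranslationInvariant

variable {X : Type*} [AddCommGroup X] [PseudoMetricSpace X]

theorem dist_self_add_left_of_invariant
    (hinv : ∀ x y z : X, dist (x + z) (y + z) = dist x y) (x y : X) :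
    dist (x + y) x = dist y 0 := by
  simpa [add_comm] using hinv y 0 x

theorem dist_add_zero_le_of_invariant
    (hinv : ∀ x y z : X, dist (x + z) (y + z) = dist x y) (x y : X) :
    dist (x + y) 0 ≤ dist x 0 + dist y 0 :=
  calc dist (x + y) 0 ≤ dist (x + y) y + dist y 0 := dist_triangle _ _ _
    _ = dist x 0 + dist y 0 := by rw [add_comm x y, dist_self_add_left_of_invariant hinv]

end TranslationInvariant

theorem apply_sum_apply_neg {R G X : Type*} [Semiring R] [AddGroup G] [AddCommMonoid X]
    [Module R X] [TopologicalSpace X] {T : G → X →L[R] X}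
    (hid : T 0 = ContinuousLinearMap.id R X) (hadd : ∀ a b, T (a + b) = (T a).comp (T b))
    {m : ℕ} (a : Fin (m + 1) → G) (k : Fin (m + 1)) (g : X) :
    T (a k) (∑ j, T (-a j) g) = g + ∑ i : Fin m, T (a k - a (k.succAbove i)) g := by
  have hcomp : ∀ j, T (a k) (T (-a j) g) = T (a k - a j) g := fun j => by
    rw [sub_eq_add_neg, hadd, ContinuousLinearMap.comp_apply]
  rw [map_sum, Finset.sum_congr rfl fun j _ => hcomp j, Fin.sum_univ_succAbove _ k, sub_self,
    hid, ContinuousLinearMap.id_apply]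

def SeparatedSumsSmall {E X : Type*} [SeminormedAddCommGroup E] [AddCommGroup X] [Module ℝ X]
    [PseudoMetricSpace X] (T : E → X →L[ℝ] X) (f : X) (C ε : ℝ) : Prop :=
  ∀ N : ℕ, 1 ≤ N → ∀ a : Fin N → E,
    (∀ i j, i ≠ j → C ≤ ‖a i - a j‖) → (∀ i, C ≤ ‖a i‖) → dist (∑ i, T (a i) f) 0 < ε

namespace SeparatedSumsSmall

variable {E X : Type*} [SeminormedAddCommGroup E] [AddCommGroup X] [Module ℝ X]
  [PseudoMetricSpace X] {T : E → X →L[ℝ] X} {f : X} {C ε : ℝ}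

theorem mono {C' : ℝ} (h : SeparatedSumsSmall T f C ε) (hC : C ≤ C') :
    SeparatedSumsSmall T f C' ε := fun N hN a hsep hnorm =>
  h N hN a (fun i j hij => hC.trans (hsep i j hij)) fun i => hC.trans (hnorm i)

theorem dist_apply_lt (h : SeparatedSumsSmall T f C ε) {a : E} (ha : C ≤ ‖a‖) :
    dist (T a f) 0 < ε := by
  simpa using h 1 le_rfl (fun _ => a) (fun i j hij => absurd (Subsingleton.elim i j) hij)
    fun _ => ha

theorem dist_sum_neg_lt (h : SeparatedSumsSmall T f C ε) {N : ℕ} (hN : 1 ≤ N) {a : Fin N → E}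
    (hsep : ∀ i j, i ≠ j → C ≤ ‖a i - a j‖) (hnorm : ∀ i, C ≤ ‖a i‖) :
    dist (∑ j, T (-a j) f) 0 < ε := by
  refine h N hN (fun j => -a j) (fun i j hij => ?_) fun i => by simpa using hnorm i
  rw [neg_sub_neg]
  exact hsep j i hij.symm

theorem dist_sum_sub_succAbove_lt (h : SeparatedSumsSmall T f C ε) (hε : 0 < ε) {m : ℕ}
    {a : Fin (m + 1) → E} (hsep : ∀ i j, i ≠ j → C ≤ ‖a i - a j‖) (k : Fin (m + 1)) :
    dist (∑ i : Fin m, T (a k - a (k.succAbove i)) f) 0 < ε := by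
  rcases Nat.eq_zero_or_pos m with rfl | hm
  · simpa using hε
  refine h m hm _ (fun i j hij => ?_) fun i => hsep _ _ (Fin.succAbove_ne k i).symm
  rw [sub_sub_sub_cancel_left]
  exact hsep _ _ fun h => hij (Fin.succAbove_right_injective h).symm

end SeparatedSumsSmall

theorem exists_dist_lt_of_separatedSumsSmall {E X : Type*} [SeminormedAddCommGroup E]
    [AddCommGroup X] [Module ℝ X] [PseudoMetricSpace X]
    (hinv : ∀ x y z : X, dist (x + z) (y + z) = dist x y) {T : E → X →L[ℝ] X}
    (hid : T 0 = ContinuousLinearMap.id ℝ X) (hadd : ∀ a b, T (a + b) = (T a).comp (T b))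
    {f g : X} {C δ : ℝ} (hf : SeparatedSumsSmall T f C δ) (hg : SeparatedSumsSmall T g C δ)
    (hδ : 0 < δ) {p : ℕ} (hp : 1 ≤ p) (a : Fin p → E) (hnorm : ∀ i, C ≤ ‖a i‖)
    (hsep : ∀ i j, i ≠ j → C ≤ ‖a i - a j‖) :
    ∃ h : X, dist h f < δ ∧ ∀ k, dist (T (a k) h) g < 2 * δ := by
  obtain ⟨m, rfl⟩ : ∃ m, p = m + 1 := Nat.exists_eq_add_one.2 hp
  refine ⟨f + ∑ j, T (-a j) g, ?_, fun k => ?_⟩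
  · rw [dist_self_add_left_of_invariant hinv]
    exact hg.dist_sum_neg_lt hp hsep hnorm
  · rw [map_add, apply_sum_apply_neg hid hadd, add_left_comm,
      dist_self_add_left_of_invariant hinv]
    calc _ ≤ _ := dist_add_zero_le_of_invariant hinv _ _
      _ < δ + δ := add_lt_add (hf.dist_apply_lt (hnorm k))
          (hg.dist_sum_sub_succAbove_lt hδ hsep k)
      _ = 2 * δ := by ring

theorem stmt_12_general {X : Type*} [AddCommGroup X] [Module ℝ X] [MetricSpace X]
    (hinv : ∀ x y z : X, dist (x + z) (y + z) = dist x y)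
    {d : ℕ} (T : EuclideanSpace ℝ (Fin d) → X →L[ℝ] X)
    (hid : T 0 = ContinuousLinearMap.id ℝ X)
    (hadd : ∀ a b, T (a + b) = (T a).comp (T b))
    (hcrit : ∃ D : Set X, Dense D ∧ ∀ f ∈ D, ∀ ε : ℝ, 0 < ε →
      ∃ C : ℝ, 0 < C ∧ ∀ N : ℕ, 1 ≤ N → ∀ a : Fin N → EuclideanSpace ℝ (Fin d),
        (∀ i j, i ≠ j → C ≤ ‖a i - a j‖) → (∀ i, C ≤ ‖a i‖) →
        dist (∑ i, T (a i) f) 0 < ε) :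
    ∀ U V : Set X, IsOpen U → IsOpen V → U.Nonempty → V.Nonempty →
      ∃ C > (0:ℝ), ∀ p : ℕ, 1 ≤ p → ∀ a : Fin p → EuclideanSpace ℝ (Fin d),
        (∀ i, C ≤ ‖a i‖) → (∀ i j, i ≠ j → C ≤ ‖a i - a j‖) →
        ∃ f ∈ U, ∀ j, T (a j) f ∈ V := by
  obtain ⟨D, hD, hDsmall⟩ := hcrit
  rintro U V hU hV ⟨u, hu⟩ ⟨v, hv⟩
  obtain ⟨ε, hε, hballU, hballV⟩ : ∃ ε > 0, Metric.ball u ε ⊆ U ∧ Metric.ball v ε ⊆ V := by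
    obtain ⟨εU, hεU, hU'⟩ := Metric.isOpen_iff.1 hU u hu
    obtain ⟨εV, hεV, hV'⟩ := Metric.isOpen_iff.1 hV v hv
    exact ⟨min εU εV, lt_min hεU hεV, (Metric.ball_subset_ball (min_le_left _ _)).trans hU',
      (Metric.ball_subset_ball (min_le_right _ _)).trans hV'⟩
  have hε3 : 0 < ε / 3 := by positivity
  obtain ⟨f, hfD, hfu⟩ := hD.exists_dist_lt u hε3
  obtain ⟨g, hgD, hgv⟩ := hD.exists_dist_lt v hε3
  obtain ⟨Cf, hCf, hf⟩ := hDsmall f hfD (ε / 3) hε3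
  obtain ⟨Cg, -, hg⟩ := hDsmall g hgD (ε / 3) hε3
  refine ⟨max Cf Cg, lt_max_of_lt_left hCf, fun p hp a hnorm hsep => ?_⟩
  obtain ⟨h, hhf, hTh⟩ := exists_dist_lt_of_separatedSumsSmall hinv hid hadd
    (SeparatedSumsSmall.mono hf (le_max_left Cf Cg))
    (SeparatedSumsSmall.mono hg (le_max_right Cf Cg)) hε3 hp a hnorm hsep
  refine ⟨h, hballU (Metric.mem_ball.2 ?_), fun k => hballV (Metric.mem_ball.2 ?_)⟩
  · linarith [dist_triangle_right h u f]
  · linarith [dist_triangle_right (T (a k) h) v g, hTh k]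

/-- a sufficient criterion (smallness of sums `Σ T_{a_i} f` over
well-separated families, on a dense set) for an operator group on a separable
F-space to have the uniform mixing property. -/
theorem stmt_12 {X : Type*} [AddCommGroup X] [Module ℝ X] [MetricSpace X]
    [CompleteSpace X] [TopologicalSpace.SeparableSpace X]
    [IsTopologicalAddGroup X] [ContinuousSMul ℝ X]
    (hinv : ∀ x y z : X, dist (x + z) (y + z) = dist x y)
    {d : ℕ} (T : EuclideanSpace ℝ (Fin d) → X →L[ℝ] X)
    (hid : T 0 = ContinuousLinearMap.id ℝ X)
    (hadd : ∀ a b, T (a + b) = (T a).comp (T b))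
    (hcrit : ∃ D : Set X, Dense D ∧ ∀ f ∈ D, ∀ ε : ℝ, 0 < ε →
      ∃ C : ℝ, 0 < C ∧ ∀ N : ℕ, 1 ≤ N → ∀ a : Fin N → EuclideanSpace ℝ (Fin d),
        (∀ i j, i ≠ j → C ≤ ‖a i - a j‖) → (∀ i, C ≤ ‖a i‖) →
        dist (∑ i, T (a i) f) 0 < ε) :
    ∀ U V : Set X, IsOpen U → IsOpen V → U.Nonempty → V.Nonempty →
      ∃ C > (0:ℝ), ∀ p : ℕ, 1 ≤ p → ∀ a : Fin p → EuclideanSpace ℝ (Fin d),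
        (∀ i, C ≤ ‖a i‖) → (∀ i j, i ≠ j → C ≤ ‖a i - a j‖) →
        ∃ f ∈ U, ∀ j, T (a j) f ∈ V :=
  stmt_12_general hinv T hid hadd hcrit
end

section
/- Let X be a separable F-space and let (T_a)_{a∈ℝ^d} be an operator group on X. Assume there exist a dense set D ⊆ X and a real number p > d such that for any f ∈ D there exists A > 0 with ‖T_a f‖ ≤ A/‖a‖^p for any a ∈ ℝ^d with ‖a‖ ≥ 1. Then (T_a)_{a∈ℝ^d} has the uniform mixing property. -/
/-!
Approximate `u ∈ U` and `v ∈ V` by points `u', v'` of the dense set and take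
`f = u' + ∑ i, T (-a i) v'`. Then `f - u'` and
`T (a j) f - v' = T (a j) u' + ∑ i ≠ j, T (a j - a i) v'` are sums of orbit points `T b w`
with `‖b‖ ≥ C`, taken at `C`-separated `b`. By subadditivity of `x ↦ dist x 0` and the decay
estimate they are bounded by sums of `‖b‖ ^ (-p)` over `C`-separated points outside the ball
of radius `C`. Sorting these points into dyadic shells `2 ^ k C ≤ ‖b‖ < 2 ^ (k + 1) C`, a
volume packing argument puts at most `8 ^ d 2 ^ (k d)` of them in the `k`-th shell, so the
sum is at most `8 ^ d / (1 - 2 ^ (d - p)) / C ^ p`: this is where `p > d` enters. Taking `C`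
large makes `f` close to `u'` and every `T (a j) f` close to `v'`.
-/

open MeasureTheory Metric Finset Module

section Packing

variable {E ι : Type*} [NormedAddCommGroup E] [NormedSpace ℝ E] [FiniteDimensional ℝ E]

theorem card_mul_pow_le_of_pairwise_le_norm_sub {C R : ℝ} (hC : 0 < C) (hR : 0 ≤ R)
    {a : ι → E} {b : E} {s : Finset ι} (hsep : (s : Set ι).Pairwise fun i j => C ≤ ‖a i - a j‖)
    (hs : ∀ i ∈ s, ‖a i - b‖ ≤ R) :
    #s * (C / 2) ^ finrank ℝ E ≤ (R + C / 2) ^ finrank ℝ E := by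
  borelize E
  set μ : Measure E := Measure.addHaar
  have hdisj : (s : Set ι).PairwiseDisjoint fun i => ball (a i) (C / 2) := fun i hi j hj hij =>
    ball_disjoint_ball <| by rw [dist_eq_norm]; linarith [hsep hi hj hij]
  have hsub : (⋃ i ∈ s, ball (a i) (C / 2)) ⊆ ball b (R + C / 2) := by
    refine Set.iUnion₂_subset fun i hi x hx => ?_
    rw [mem_ball] at hx ⊢
    linarith [dist_triangle x (a i) b, dist_eq_norm (a i) b ▸ hs i hi]
  have hvol : ∑ i ∈ s, μ (ball (a i) (C / 2)) ≤ μ (ball b (R + C / 2)) := by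
    rw [← measure_biUnion_finset hdisj fun i _ => measurableSet_ball]
    exact measure_mono hsub
  simp only [Measure.addHaar_ball_of_pos μ _ (half_pos hC), Measure.addHaar_ball_of_pos μ _
    (by positivity : 0 < R + C / 2), sum_const, nsmul_eq_mul, ← mul_assoc] at hvol
  rw [ENNReal.mul_le_mul_iff_left (measure_ball_pos μ _ one_pos).ne' measure_ball_lt_top.ne,
    ← ENNReal.ofReal_natCast, ← ENNReal.ofReal_mul (by positivity)] at hvol
  exact (ENNReal.ofReal_le_ofReal_iff (by positivity)).mp hvol

theorem two_pow_log_floor_le {x : ℝ} (hx : 1 ≤ x) : (2 : ℝ) ^ Nat.log 2 ⌊x⌋₊ ≤ x := by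
  have hfloor : ⌊x⌋₊ ≠ 0 := (Nat.floor_pos.mpr hx).ne'
  calc (2 : ℝ) ^ Nat.log 2 ⌊x⌋₊ ≤ ⌊x⌋₊ := mod_cast Nat.pow_log_le_self 2 hfloor
    _ ≤ x := Nat.floor_le (by linarith)

theorem lt_two_pow_log_floor_succ (x : ℝ) : x < 2 ^ (Nat.log 2 ⌊x⌋₊ + 1) := by
  calc x < ⌊x⌋₊ + 1 := Nat.lt_floor_add_one x
    _ ≤ (2 : ℝ) ^ (Nat.log 2 ⌊x⌋₊ + 1) := mod_cast Nat.lt_pow_succ_log_self one_lt_two _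

theorem sum_inv_rpow_norm_filter_log_le {p C : ℝ} (hp : 0 ≤ p) (hC : 0 < C)
    {a : ι → E} {s : Finset ι} (hsep : (s : Set ι).Pairwise fun i j => C ≤ ‖a i - a j‖)
    (hfar : ∀ i ∈ s, C ≤ ‖a i‖) (k : ℕ) :
    ∑ i ∈ s with Nat.log 2 ⌊‖a i‖ / C⌋₊ = k, (‖a i‖ ^ p)⁻¹ ≤
      8 ^ finrank ℝ E * ((2 : ℝ) ^ finrank ℝ E / 2 ^ p) ^ k / C ^ p := by
  set n := finrank ℝ E
  set t := s.filter fun i => Nat.log 2 ⌊‖a i‖ / C⌋₊ = k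
  have hshell : ∀ i ∈ t, 2 ^ k * C ≤ ‖a i‖ ∧ ‖a i‖ ≤ 2 ^ (k + 1) * C := by
    intro i hi
    obtain ⟨his, rfl⟩ := mem_filter.mp hi
    have hx : 1 ≤ ‖a i‖ / C := (one_le_div hC).mpr (hfar i his)
    exact ⟨(le_div_iff₀ hC).mp (two_pow_log_floor_le hx),
      ((div_lt_iff₀ hC).mp (lt_two_pow_log_floor_succ _)).le⟩
  have hcard : (#t : ℝ) ≤ 8 ^ n * (2 ^ n) ^ k := by
    have h := card_mul_pow_le_of_pairwise_le_norm_sub hC (by positivity) (b := 0)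
      (R := 2 ^ (k + 1) * C)
      (hsep.mono (coe_subset.mpr (filter_subset _ _))) fun i hi => by
        simpa only [sub_zero] using (hshell i hi).2
    have hR : 2 ^ (k + 1) * C + C / 2 ≤ 8 * 2 ^ k * (C / 2) := by
      rw [pow_succ]; nlinarith [one_le_pow₀ (M₀ := ℝ) one_le_two (n := k)]
    have h' := h.trans (pow_le_pow_left₀ (by positivity) hR n)
    rwa [mul_pow, mul_pow, ← pow_mul, mul_comm k, pow_mul,
      mul_le_mul_iff_left₀ (by positivity)] at h'
  calc ∑ i ∈ t, (‖a i‖ ^ p)⁻¹ ≤ ∑ _i ∈ t, ((2 ^ k * C) ^ p)⁻¹ :=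
        sum_le_sum fun i hi => inv_anti₀ (by positivity) <|
          Real.rpow_le_rpow (by positivity) (hshell i hi).1 hp
    _ = #t * ((2 ^ p) ^ k)⁻¹ / C ^ p := by
        rw [sum_const, nsmul_eq_mul, Real.mul_rpow (by positivity) hC.le,
          ← Real.rpow_pow_comm zero_le_two, mul_inv, mul_div_assoc, div_eq_mul_inv]
    _ ≤ 8 ^ n * (2 ^ n) ^ k * ((2 ^ p) ^ k)⁻¹ / C ^ p := by gcongr
    _ = 8 ^ n * ((2 : ℝ) ^ n / 2 ^ p) ^ k / C ^ p := by ring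

theorem sum_inv_rpow_norm_le {p C : ℝ} (hp : (finrank ℝ E : ℝ) < p) (hC : 0 < C)
    {a : ι → E} {s : Finset ι} (hsep : (s : Set ι).Pairwise fun i j => C ≤ ‖a i - a j‖)
    (hfar : ∀ i ∈ s, C ≤ ‖a i‖) :
    ∑ i ∈ s, (‖a i‖ ^ p)⁻¹ ≤
      8 ^ finrank ℝ E / (1 - (2 : ℝ) ^ finrank ℝ E / 2 ^ p) / C ^ p := by
  have hp0 : 0 ≤ p := (Nat.cast_nonneg _).trans hp.le
  set r : ℝ := 2 ^ finrank ℝ E / 2 ^ p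
  have hr0 : 0 ≤ r := by positivity
  have hr1 : r < 1 := by
    rw [div_lt_one (by positivity), ← Real.rpow_natCast]
    exact Real.rpow_lt_rpow_of_exponent_lt one_lt_two hp
  set shell : ι → ℕ := fun i => Nat.log 2 ⌊‖a i‖ / C⌋₊
  have hgeom : ∑ k ∈ s.image shell, r ^ k ≤ (1 - r)⁻¹ :=
    (tsum_geometric_of_lt_one hr0 hr1) ▸
      (summable_geometric_of_lt_one hr0 hr1).sum_le_tsum _ fun k _ => pow_nonneg hr0 k
  rw [← sum_fiberwise_of_maps_to fun i hi => mem_image_of_mem shell hi]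
  calc ∑ k ∈ s.image shell, ∑ i ∈ s with shell i = k, (‖a i‖ ^ p)⁻¹
      ≤ ∑ k ∈ s.image shell, 8 ^ finrank ℝ E * r ^ k / C ^ p :=
        sum_le_sum fun k _ => sum_inv_rpow_norm_filter_log_le hp0 hC hsep hfar k
    _ = 8 ^ finrank ℝ E / C ^ p * ∑ k ∈ s.image shell, r ^ k := by
        rw [mul_sum]; exact sum_congr rfl fun k _ => by ring
    _ ≤ 8 ^ finrank ℝ E / C ^ p * (1 - r)⁻¹ := by gcongr
    _ = 8 ^ finrank ℝ E / (1 - r) / C ^ p := by ring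

end Packing

section TranslationInvariant

variable {X : Type*} [AddCommGroup X] [PseudoMetricSpace X]

theorem dist_add_self_right_eq (hinv : ∀ x y z : X, dist (x + z) (y + z) = dist x y)
    (w z : X) : dist (w + z) z = dist w 0 := by
  simpa only [zero_add] using hinv w 0 z

theorem dist_add_le_dist_zero_add_dist (hinv : ∀ x y z : X, dist (x + z) (y + z) = dist x y)
    (w z t : X) : dist (w + z) t ≤ dist w 0 + dist z t :=
  dist_add_self_right_eq hinv w z ▸ dist_triangle (w + z) z t

theorem dist_sum_zero_le (hinv : ∀ x y z : X, dist (x + z) (y + z) = dist x y) {ι : Type*}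
    (s : Finset ι) (g : ι → X) : dist (∑ i ∈ s, g i) 0 ≤ ∑ i ∈ s, dist (g i) 0 :=
  le_sum_of_subadditive (fun x : X => dist x 0) (dist_self 0).le
    (fun x y => dist_add_le_dist_zero_add_dist hinv x y 0) s g

end TranslationInvariant

theorem apply_add_sum_neg {X E ι : Type*} [AddCommGroup X] [Module ℝ X] [TopologicalSpace X]
    [AddCommGroup E] [Fintype ι] [DecidableEq ι] (T : E → X →L[ℝ] X)
    (hid : T 0 = ContinuousLinearMap.id ℝ X) (hadd : ∀ a b, T (a + b) = (T a).comp (T b))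
    (u v : X) (a : ι → E) (j : ι) :
    T (a j) (u + ∑ i, T (-a i) v) = T (a j) u + (v + ∑ i ∈ univ.erase j, T (a j - a i) v) := by
  have horbit : ∀ i, T (a j) (T (-a i) v) = T (a j - a i) v := fun i => by
    rw [sub_eq_add_neg, hadd]; rfl
  rw [map_add, map_sum, sum_congr rfl fun i _ => horbit i, ← add_sum_erase _ _ (mem_univ j),
    sub_self, hid, ContinuousLinearMap.id_apply]

def HasPowDecay {E X : Type*} [Norm E] [Zero X] [Dist X] (g : E → X) (A p : ℝ) : Prop :=
  ∀ a, 1 ≤ ‖a‖ → dist (g a) 0 ≤ A / ‖a‖ ^ p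

section PowDecay

variable {X E ι : Type*} [AddCommGroup X] [PseudoMetricSpace X]
  [NormedAddCommGroup E] [NormedSpace ℝ E] [FiniteDimensional ℝ E]

theorem dist_sum_le_of_hasPowDecay (hinv : ∀ x y z : X, dist (x + z) (y + z) = dist x y)
    {g : E → X} {A p C : ℝ} (hg : HasPowDecay g A p) (hA : 0 ≤ A)
    (hp : (finrank ℝ E : ℝ) < p) (hC : 1 ≤ C) {a : ι → E} {s : Finset ι}
    (hsep : (s : Set ι).Pairwise fun i j => C ≤ ‖a i - a j‖) (hfar : ∀ i ∈ s, C ≤ ‖a i‖) :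
    dist (∑ i ∈ s, g (a i)) 0 ≤
      A * (8 ^ finrank ℝ E / (1 - (2 : ℝ) ^ finrank ℝ E / 2 ^ p)) / C ^ p :=
  calc dist (∑ i ∈ s, g (a i)) 0 ≤ ∑ i ∈ s, dist (g (a i)) 0 := dist_sum_zero_le hinv s _
    _ ≤ ∑ i ∈ s, A * (‖a i‖ ^ p)⁻¹ :=
        sum_le_sum fun i hi => (hg (a i) (hC.trans (hfar i hi))).trans_eq (div_eq_mul_inv _ _)
    _ ≤ A * (8 ^ finrank ℝ E / (1 - (2 : ℝ) ^ finrank ℝ E / 2 ^ p) / C ^ p) := by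
        rw [← mul_sum]
        exact mul_le_mul_of_nonneg_left (sum_inv_rpow_norm_le hp (by linarith) hsep hfar) hA
    _ = _ := (mul_div_assoc _ _ _).symm

variable [Fintype ι] [Module ℝ X] (T : E → X →L[ℝ] X) {u v : X} {Au Av p C : ℝ} {a : ι → E}

theorem dist_add_sum_neg_le (hinv : ∀ x y z : X, dist (x + z) (y + z) = dist x y)
    (hv : HasPowDecay (T · v) Av p) (hAv : 0 ≤ Av) (hp : (finrank ℝ E : ℝ) < p) (hC : 1 ≤ C)
    (ha : ∀ i, C ≤ ‖a i‖) (hsep : Pairwise fun i j => C ≤ ‖a i - a j‖) :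
    dist (u + ∑ i, T (-a i) v) u ≤
      Av * (8 ^ finrank ℝ E / (1 - (2 : ℝ) ^ finrank ℝ E / 2 ^ p)) / C ^ p := by
  rw [add_comm, dist_add_self_right_eq hinv]
  refine dist_sum_le_of_hasPowDecay hinv hv hAv hp hC (fun i _ j _ hij => ?_)
    fun i _ => (norm_neg (a i)).symm ▸ ha i
  simpa only [neg_sub_neg, norm_sub_rev] using hsep hij

theorem dist_apply_add_sum_neg_le [DecidableEq ι]
    (hinv : ∀ x y z : X, dist (x + z) (y + z) = dist x y)
    (hid : T 0 = ContinuousLinearMap.id ℝ X) (hadd : ∀ a b, T (a + b) = (T a).comp (T b))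
    (hu : HasPowDecay (T · u) Au p) (hv : HasPowDecay (T · v) Av p) (hAu : 0 ≤ Au)
    (hAv : 0 ≤ Av) (hp : (finrank ℝ E : ℝ) < p) (hC : 1 ≤ C) (ha : ∀ i, C ≤ ‖a i‖)
    (hsep : Pairwise fun i j => C ≤ ‖a i - a j‖) (j : ι) :
    dist (T (a j) (u + ∑ i, T (-a i) v)) v ≤
      (Au + Av * (8 ^ finrank ℝ E / (1 - (2 : ℝ) ^ finrank ℝ E / 2 ^ p))) / C ^ p := by
  have hu' : dist (T (a j) u) 0 ≤ Au / C ^ p :=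
    (hu (a j) (hC.trans (ha j))).trans <| div_le_div_of_nonneg_left hAu (by positivity)
      (Real.rpow_le_rpow (by linarith) (ha j) (le_trans (Nat.cast_nonneg _) hp.le))
  have hsum := dist_sum_le_of_hasPowDecay hinv hv hAv hp hC (a := fun i => a j - a i)
    (s := univ.erase j) (fun i _ i' _ hii' => ?_) fun i hi => ?_
  · rw [apply_add_sum_neg T hid hadd, add_div]
    refine (dist_add_le_dist_zero_add_dist hinv _ _ _).trans ?_
    rw [add_comm v, dist_add_self_right_eq hinv]
    exact add_le_add hu' hsum
  · simpa only [sub_sub_sub_cancel_left, norm_sub_rev] using hsep hii'.symm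
  · simpa only [norm_sub_rev] using hsep (ne_of_mem_erase hi)

end PowDecay

theorem stmt_13_general {X : Type*} [AddCommGroup X] [Module ℝ X] [MetricSpace X]
    (hinv : ∀ x y z : X, dist (x + z) (y + z) = dist x y)
    {d : ℕ} (T : EuclideanSpace ℝ (Fin d) → X →L[ℝ] X)
    (hid : T 0 = ContinuousLinearMap.id ℝ X)
    (hadd : ∀ a b, T (a + b) = (T a).comp (T b))
    (p : ℝ) (hp : (d : ℝ) < p)
    (hdecay : ∃ D : Set X, Dense D ∧ ∀ f ∈ D, ∃ A : ℝ, 0 < A ∧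
      ∀ a : EuclideanSpace ℝ (Fin d), 1 ≤ ‖a‖ →
        dist (T a f) 0 ≤ A / ‖a‖ ^ p) :
    ∀ U V : Set X, IsOpen U → IsOpen V → U.Nonempty → V.Nonempty →
      ∃ C > (0:ℝ), ∀ q : ℕ, 1 ≤ q → ∀ a : Fin q → EuclideanSpace ℝ (Fin d),
        (∀ i, C ≤ ‖a i‖) → (∀ i j, i ≠ j → C ≤ ‖a i - a j‖) →
        ∃ f ∈ U, ∀ j, T (a j) f ∈ V := by
  intro U V hU hV ⟨u, hu⟩ ⟨v, hv⟩
  obtain ⟨D, hD, hDdecay⟩ := hdecay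
  obtain ⟨εu, hεu, huU⟩ := Metric.isOpen_iff.mp hU u hu
  obtain ⟨εv, hεv, hvV⟩ := Metric.isOpen_iff.mp hV v hv
  set ε := min εu εv / 2 with hεdef
  have hε : 0 < ε := by positivity
  obtain ⟨u', hu'D, hu'u⟩ := hD.exists_dist_lt u hε
  obtain ⟨v', hv'D, hv'v⟩ := hD.exists_dist_lt v hε
  obtain ⟨Au, hAu, hu'⟩ := hDdecay u' hu'D
  obtain ⟨Av, hAv, hv'⟩ := hDdecay v' hv'D
  have hp' : (finrank ℝ (EuclideanSpace ℝ (Fin d)) : ℝ) < p := by rwa [finrank_euclideanSpace_fin]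
  set K := Au + Av * (8 ^ finrank ℝ (EuclideanSpace ℝ (Fin d)) /
    (1 - (2 : ℝ) ^ finrank ℝ (EuclideanSpace ℝ (Fin d)) / 2 ^ p))
  obtain ⟨C, hCε, hC⟩ : ∃ C, K / C ^ p < ε ∧ 1 ≤ C :=
    (((tendsto_rpow_atTop (by linarith [d.cast_nonneg (α := ℝ)])).const_div_atTop K).eventually
      (gt_mem_nhds hε)).and (Filter.eventually_ge_atTop 1) |>.exists
  refine ⟨C, by linarith, fun q _ a ha hsep => ⟨u' + ∑ i, T (-a i) v', huU ?_, fun j => hvV ?_⟩⟩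
  · have hf : dist (u' + ∑ i, T (-a i) v') u' < ε :=
      (dist_add_sum_neg_le T hinv hv' hAv.le hp' hC ha hsep).trans_lt <|
        lt_of_le_of_lt (by gcongr; linarith) hCε
    rw [mem_ball]
    linarith [dist_triangle (u' + ∑ i, T (-a i) v') u' u, min_le_left εu εv, dist_comm u u', hεdef]
  · have hf : dist (T (a j) (u' + ∑ i, T (-a i) v')) v' < ε :=
      (dist_apply_add_sum_neg_le T hinv hid hadd hu' hv' hAu.le hAv.le hp' hC ha hsep j).trans_lt
        hCε
    rw [mem_ball]
    linarith [dist_triangle (T (a j) (u' + ∑ i, T (-a i) v')) v' v, min_le_right εu εv, hεdef,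
      dist_comm v v']

/-- if an operator group on a separable F-space satisfies a polynomial
decay estimate `‖T_a f‖ ≤ A/‖a‖^p` (with `p > d`) on a dense set, then it has the
uniform mixing property. -/
theorem stmt_13 {X : Type*} [AddCommGroup X] [Module ℝ X] [MetricSpace X]
    [CompleteSpace X] [TopologicalSpace.SeparableSpace X]
    [IsTopologicalAddGroup X] [ContinuousSMul ℝ X]
    (hinv : ∀ x y z : X, dist (x + z) (y + z) = dist x y)
    {d : ℕ} (T : EuclideanSpace ℝ (Fin d) → X →L[ℝ] X)
    (hid : T 0 = ContinuousLinearMap.id ℝ X)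
    (hadd : ∀ a b, T (a + b) = (T a).comp (T b))
    (p : ℝ) (hp : (d : ℝ) < p)
    (hdecay : ∃ D : Set X, Dense D ∧ ∀ f ∈ D, ∃ A : ℝ, 0 < A ∧
      ∀ a : EuclideanSpace ℝ (Fin d), 1 ≤ ‖a‖ →
        dist (T a f) 0 ≤ A / ‖a‖ ^ p) :
    ∀ U V : Set X, IsOpen U → IsOpen V → U.Nonempty → V.Nonempty →
      ∃ C > (0:ℝ), ∀ q : ℕ, 1 ≤ q → ∀ a : Fin q → EuclideanSpace ℝ (Fin d),
        (∀ i, C ≤ ‖a i‖) → (∀ i j, i ≠ j → C ≤ ‖a i - a j‖) →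
        ∃ f ∈ U, ∀ j, T (a j) f ∈ V :=
  stmt_13_general hinv T hid hadd p hp hdecay
end

section
/- The group of translations by real vectors acting on entire functions of d complex variables has the Runge property; concretely: for every R > 0 there exists C > 0 such that for any N ≥ 1, any b_1, …, b_N ∈ ℝ^d ⊂ ℂ^d with ‖b_i − b_j‖ ≥ C for all i ≠ j, any entire functions g_1, …, g_N : ℂ^d → ℂ and any ε > 0, there exists an entire function f : ℂ^d → ℂ such that sup_{‖z‖≤R} |f(z + b_i) − g_i(z)| < ε for each i = 1, …, N. -/
/-- The embedding of `ℝ^d` into `ℂ^d`. -/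
noncomputable def embedRC {d : ℕ} (x : EuclideanSpace ℝ (Fin d)) :
    EuclideanSpace ℂ (Fin d) :=
  WithLp.toLp 2 (fun k => (x k : ℂ))

/-!
Near `bᵢ`, the entire function `hⱼ x = exp (-∑ₖ (xₖ - bⱼₖ)² / (20 R²))` is within `1/10` of `1`
if `j = i` and has modulus at most `1/10` if `j ≠ i`: for a real vector `a`,
`Re ∑ₖ (wₖ + aₖ)² = ‖w + a‖² - 2 ∑ₖ (Im wₖ)²`, which is large once `‖a‖ ≥ 20 R ≥ 20 ‖w‖`.
The polynomial `3u² - 2u³` has superattracting fixed points `0` and `1`, so its iterates turn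
these almost-indicators into functions that are geometrically close to `δᵢⱼ` on the balls, and
`f = ∑ⱼ gⱼ (· - bⱼ) · (3u² - 2u³)^[n] ∘ hⱼ` works for `n` large.
-/

theorem dist_iterate_le_of_contracting {α : Type*} [PseudoMetricSpace α] {f : α → α} {c : α}
    {r q : ℝ} (hq₀ : 0 ≤ q) (hq₁ : q ≤ 1)
    (hf : ∀ u, dist u c ≤ r → dist (f u) c ≤ q * dist u c) {u : α} (hu : dist u c ≤ r)
    (n : ℕ) : dist (f^[n] u) c ≤ q ^ n * dist u c := by
  induction n with
  | zero => simp
  | succ n ih =>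
    have hn : dist (f^[n] u) c ≤ r :=
      ih.trans <| (mul_le_of_le_one_left dist_nonneg (pow_le_one₀ hq₀ hq₁)).trans hu
    calc dist (f^[n + 1] u) c ≤ q * dist (f^[n] u) c := by
          rw [Function.iterate_succ_apply']; exact hf _ hn
      _ ≤ q * (q ^ n * dist u c) := by gcongr
      _ = q ^ (n + 1) * dist u c := by ring

def smoothstep (u : ℂ) : ℂ := 3 * u ^ 2 - 2 * u ^ 3

theorem differentiable_smoothstep_iterate (n : ℕ) : Differentiable ℂ smoothstep^[n] :=
  Differentiable.iterate (by unfold smoothstep; fun_prop) n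

theorem dist_smoothstep_zero_le {u : ℂ} (hu : dist u 0 ≤ 1 / 10) :
    dist (smoothstep u) 0 ≤ 1 / 3 * dist u 0 := by
  simp only [dist_zero_right] at hu ⊢
  have hfactor : ‖3 - 2 * u‖ ≤ 16 / 5 := by
    calc ‖3 - 2 * u‖ ≤ ‖(3 : ℂ)‖ + ‖2 * u‖ := norm_sub_le _ _
      _ ≤ 16 / 5 := by rw [norm_mul]; norm_num; linarith
  calc ‖smoothstep u‖ = ‖u‖ * ‖u‖ * ‖3 - 2 * u‖ := by
        rw [← norm_mul, ← norm_mul]; unfold smoothstep; ring_nf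
    _ ≤ ‖u‖ * (1 / 10) * (16 / 5) := by gcongr
    _ ≤ 1 / 3 * ‖u‖ := by nlinarith [norm_nonneg u]

theorem dist_smoothstep_one_le {u : ℂ} (hu : dist u 1 ≤ 1 / 10) :
    dist (smoothstep u) 1 ≤ 1 / 3 * dist u 1 := by
  simp only [dist_eq_norm] at hu ⊢
  have hfactor : ‖2 * (u - 1) + 3‖ ≤ 16 / 5 := by
    calc ‖2 * (u - 1) + 3‖ ≤ ‖2 * (u - 1)‖ + ‖(3 : ℂ)‖ := norm_add_le _ _
      _ ≤ 16 / 5 := by rw [norm_mul]; norm_num; linarith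
  calc ‖smoothstep u - 1‖ = ‖u - 1‖ * ‖u - 1‖ * ‖2 * (u - 1) + 3‖ := by
        rw [← norm_mul, ← norm_mul, ← norm_neg]; unfold smoothstep; ring_nf
    _ ≤ ‖u - 1‖ * (1 / 10) * (16 / 5) := by gcongr
    _ ≤ 1 / 3 * ‖u - 1‖ := by nlinarith [norm_nonneg (u - 1)]

theorem norm_smoothstep_iterate_le {u : ℂ} (hu : ‖u‖ ≤ 1 / 10) (n : ℕ) :
    ‖smoothstep^[n] u‖ ≤ (1 / 3) ^ n / 10 := by
  rw [← dist_zero_right] at hu ⊢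
  calc dist (smoothstep^[n] u) 0 ≤ (1 / 3) ^ n * dist u 0 :=
        dist_iterate_le_of_contracting (by norm_num) (by norm_num)
          (fun _ ↦ dist_smoothstep_zero_le) hu n
    _ ≤ (1 / 3) ^ n / 10 := by rw [div_eq_mul_one_div _ (10 : ℝ)]; gcongr

theorem norm_smoothstep_iterate_sub_one_le {u : ℂ} (hu : ‖u - 1‖ ≤ 1 / 10) (n : ℕ) :
    ‖smoothstep^[n] u - 1‖ ≤ (1 / 3) ^ n / 10 := by
  rw [← dist_eq_norm] at hu ⊢
  calc dist (smoothstep^[n] u) 1 ≤ (1 / 3) ^ n * dist u 1 :=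
        dist_iterate_le_of_contracting (by norm_num) (by norm_num)
          (fun _ ↦ dist_smoothstep_one_le) hu n
    _ ≤ (1 / 3) ^ n / 10 := by rw [div_eq_mul_one_div _ (10 : ℝ)]; gcongr

theorem exists_differentiable_approx_of_almost_indicator {E ι : Type*} [NormedAddCommGroup E]
    [NormedSpace ℂ E] [Fintype ι] {K : ι → Set E} (hK : ∀ i, IsCompact (K i))
    {h : ι → E → ℂ} (hh : ∀ j, Differentiable ℂ (h j))
    (hh_one : ∀ i, ∀ x ∈ K i, ‖h i x - 1‖ ≤ 1 / 10)
    (hh_zero : ∀ i j, i ≠ j → ∀ x ∈ K i, ‖h j x‖ ≤ 1 / 10)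
    {G : ι → E → ℂ} (hG : ∀ j, Differentiable ℂ (G j)) {ε : ℝ} (hε : 0 < ε) :
    ∃ f : E → ℂ, Differentiable ℂ f ∧ ∀ i, ∀ x ∈ K i, ‖f x - G i x‖ < ε := by
  classical
  have hcont : Continuous fun x ↦ ∑ j, ‖G j x‖ :=
    continuous_finsetSum _ fun j _ ↦ (hG j).continuous.norm
  obtain ⟨M, hM⟩ := (isCompact_iUnion hK).bddAbove_image hcont.continuousOn
  obtain ⟨n, hn⟩ : ∃ n : ℕ, M * ((1 / 3) ^ n / 10) < ε :=
    ((((tendsto_pow_atTop_nhds_zero_of_lt_one (by norm_num) (by norm_num)).div_const 10).const_mul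
      M).eventually_lt_const (by simpa using hε)).exists
  refine ⟨fun x ↦ ∑ j, G j x * smoothstep^[n] (h j x),
    Differentiable.fun_sum fun j _ ↦ (hG j).mul ((differentiable_smoothstep_iterate n).comp (hh j)),
    fun i x hx ↦ ?_⟩
  have hsharp : ∀ j, ‖smoothstep^[n] (h j x) - if j = i then 1 else 0‖ ≤ (1 / 3) ^ n / 10 := by
    intro j
    split_ifs with hji
    · subst hji
      exact norm_smoothstep_iterate_sub_one_le (hh_one j x hx) n
    · simpa using norm_smoothstep_iterate_le (hh_zero i j (Ne.symm hji) x hx) n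
  calc ‖∑ j, G j x * smoothstep^[n] (h j x) - G i x‖
      = ‖∑ j, G j x * (smoothstep^[n] (h j x) - if j = i then 1 else 0)‖ := by
        simp [mul_sub, Finset.sum_sub_distrib]
    _ ≤ ∑ j, ‖G j x‖ * ((1 / 3) ^ n / 10) :=
        norm_sum_le_of_le _ fun j _ ↦ by rw [norm_mul]; gcongr; exact hsharp j
    _ = (∑ j, ‖G j x‖) * ((1 / 3) ^ n / 10) := (Finset.sum_mul ..).symm
    _ ≤ M * ((1 / 3) ^ n / 10) := by
        gcongr
        exact hM ⟨x, Set.mem_iUnion_of_mem i hx, rfl⟩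
    _ < ε := hn

section GaussBump

variable {ι : Type*} [Fintype ι]

def sqSum (w : EuclideanSpace ℂ ι) : ℂ := ∑ k, w k ^ 2

theorem differentiable_sqSum : Differentiable ℂ (sqSum (ι := ι)) := by
  unfold sqSum; fun_prop

theorem norm_sqSum_le (w : EuclideanSpace ℂ ι) : ‖sqSum w‖ ≤ ‖w‖ ^ 2 := by
  rw [EuclideanSpace.norm_sq_eq]
  exact (norm_sum_le _ _).trans_eq (by simp [norm_pow])

theorem re_sqSum (w : EuclideanSpace ℂ ι) :
    (sqSum w).re = ‖w‖ ^ 2 - 2 * ∑ k, (w k).im ^ 2 := by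
  rw [EuclideanSpace.norm_sq_eq, Finset.mul_sum, ← Finset.sum_sub_distrib, sqSum, Complex.re_sum]
  refine Finset.sum_congr rfl fun k _ ↦ ?_
  rw [Complex.sq_norm, Complex.normSq_apply, pow_two, Complex.mul_re]
  ring

noncomputable def gaussBump (R : ℝ) (w : EuclideanSpace ℂ ι) : ℂ :=
  Complex.exp (-sqSum w / (20 * R ^ 2))

theorem differentiable_gaussBump (R : ℝ) : Differentiable ℂ (gaussBump (ι := ι) R) := by
  have := differentiable_sqSum (ι := ι)
  unfold gaussBump
  fun_prop

theorem norm_gaussBump_sub_one_le {R : ℝ} (hR : 0 < R) {w : EuclideanSpace ℂ ι} (hw : ‖w‖ ≤ R) :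
    ‖gaussBump R w - 1‖ ≤ 1 / 10 := by
  have hexp : ‖-sqSum w / (20 * R ^ 2)‖ ≤ 1 / 20 := by
    rw [norm_div, norm_neg, div_le_iff₀ (by norm_num; positivity)]
    calc ‖sqSum w‖ ≤ R ^ 2 := (norm_sqSum_le w).trans (by gcongr)
      _ = 1 / 20 * ‖(20 * R ^ 2 : ℂ)‖ := by norm_cast; rw [Real.norm_of_nonneg (by positivity)]; ring
  calc ‖gaussBump R w - 1‖ ≤ 2 * (1 / 20) :=
        (Complex.norm_exp_sub_one_le (hexp.trans (by norm_num))).trans (by gcongr)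
    _ = 1 / 10 := by norm_num

end GaussBump

section Embedding

variable {d : ℕ}

theorem embedRC_sub (a b : EuclideanSpace ℝ (Fin d)) :
    embedRC (a - b) = embedRC a - embedRC b := by
  ext k; simp [embedRC]

theorem norm_embedRC (a : EuclideanSpace ℝ (Fin d)) : ‖embedRC a‖ = ‖a‖ := by
  simp [embedRC, EuclideanSpace.norm_eq]

theorem le_re_sqSum_add_embedRC (w : EuclideanSpace ℂ (Fin d)) (a : EuclideanSpace ℝ (Fin d)) :
    ‖w + embedRC a‖ ^ 2 - 2 * ‖w‖ ^ 2 ≤ (sqSum (w + embedRC a)).re := by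
  have him : ∑ k, ((w + embedRC a) k).im ^ 2 ≤ ∑ k, ‖w k‖ ^ 2 :=
    Finset.sum_le_sum fun k _ ↦ by
      rw [Complex.sq_norm, pow_two]
      simpa [embedRC] using Complex.im_sq_le_normSq (w k)
  rw [re_sqSum, EuclideanSpace.norm_sq_eq w]
  linarith

theorem norm_gaussBump_add_embedRC_le {R : ℝ} (hR : 0 < R) {w : EuclideanSpace ℂ (Fin d)}
    (hw : ‖w‖ ≤ R) {a : EuclideanSpace ℝ (Fin d)} (ha : 20 * R ≤ ‖a‖) :
    ‖gaussBump R (w + embedRC a)‖ ≤ 1 / 10 := by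
  have hfar : 19 * R ≤ ‖w + embedRC a‖ := by
    have := norm_sub_norm_le (embedRC a) (-w)
    rw [norm_embedRC, norm_neg, sub_neg_eq_add, add_comm] at this
    linarith
  have hre : 359 * R ^ 2 ≤ (sqSum (w + embedRC a)).re := by
    nlinarith [le_re_sqSum_add_embedRC w a, norm_nonneg w]
  have hexp : (-sqSum (w + embedRC a) / (20 * R ^ 2)).re ≤ -9 := by
    rw [show (20 * R ^ 2 : ℂ) = ((20 * R ^ 2 : ℝ) : ℂ) by push_cast; rfl, Complex.div_ofReal_re,
      Complex.neg_re, div_le_iff₀ (by positivity)]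
    nlinarith
  rw [gaussBump, Complex.norm_exp]
  calc Real.exp _ ≤ Real.exp (-9) := Real.exp_le_exp.mpr hexp
    _ ≤ 1 / 10 := by
      rw [Real.exp_neg, one_div]
      gcongr
      linarith [Real.add_one_le_exp 9]

end Embedding

/-- the group of translations by real vectors acting on entire functions
on `ℂ^d` has the Runge property. -/
theorem stmt_15 {d : ℕ} (R : ℝ) (hR : 0 < R) :
    ∃ C : ℝ, 0 < C ∧ ∀ N : ℕ, 1 ≤ N → ∀ b : Fin N → EuclideanSpace ℝ (Fin d),
      (∀ i j, i ≠ j → C ≤ ‖b i - b j‖) →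
      ∀ g : Fin N → (EuclideanSpace ℂ (Fin d) → ℂ), (∀ i, Differentiable ℂ (g i)) →
      ∀ ε : ℝ, 0 < ε →
      ∃ f : EuclideanSpace ℂ (Fin d) → ℂ, Differentiable ℂ f ∧
        ∀ i, ∀ z : EuclideanSpace ℂ (Fin d), ‖z‖ ≤ R →
          ‖f (z + embedRC (b i)) - g i z‖ < ε := by
  refine ⟨20 * R, by positivity, fun N _ b hb g hg ε hε ↦ ?_⟩
  have hshift : ∀ i j x, x - embedRC (b j) = x - embedRC (b i) + embedRC (b i - b j) := by
    intro i j x; rw [embedRC_sub]; abel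
  obtain ⟨f, hf, hfK⟩ := exists_differentiable_approx_of_almost_indicator
    (K := fun i ↦ Metric.closedBall (embedRC (b i)) R) (fun i ↦ isCompact_closedBall _ _)
    (h := fun j x ↦ gaussBump R (x - embedRC (b j)))
    (fun j ↦ (differentiable_gaussBump R).comp (g := gaussBump R) (differentiable_id.sub_const _))
    (fun i x hx ↦ norm_gaussBump_sub_one_le hR (mem_closedBall_iff_norm.mp hx))
    (fun i j hij x hx ↦ by
      simpa only [hshift i j x] using
        norm_gaussBump_add_embedRC_le hR (mem_closedBall_iff_norm.mp hx) (hb i j hij))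
    (G := fun j x ↦ g j (x - embedRC (b j)))
    (fun j ↦ (hg j).comp (differentiable_id.sub_const _)) hε
  refine ⟨f, hf, fun i z hz ↦ ?_⟩
  simpa using hfK i (z + embedRC (b i)) (by simpa [mem_closedBall_iff_norm] using hz)
end

section
/- Let X be a separable F-space, let K be a compact subset of ℝ^d∖{0}, let (λ_n) be an increasing sequence of positive real numbers tending to infinity, and let (T_a)_{a∈ℝ^d} be a strongly continuous operator group on X which is locally separating. Assume ⋂_{a∈K} HC((T_{λ_n a})_n) is nonempty. Then for all A > δ > 0 and all N ∈ ℕ, one can find M ≥ N and finitely many elements (y_{n,k})_{N≤n≤M, 1≤k≤q_n} of K satisfying: (A) for any n, m ∈ {N,…,M} and admissible k, j, either ‖λ_n y_{n,k} − λ_m y_{m,j}‖ < δ or ‖λ_n y_{n,k} − λ_m y_{m,j}‖ > A; and (B) K ⊆ ⋃_{n=N}^{M} ⋃_{k=1}^{q_n} B(y_{n,k}, δ/λ_n). -/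
/-- In a real topological vector space containing a nonzero vector, every nonempty
open set meets the complement of any finite set. -/
theorem aux_open_sub_finite {X : Type*} [AddCommGroup X] [Module ℝ X]
    [TopologicalSpace X] [IsTopologicalAddGroup X] [ContinuousSMul ℝ X]
    {U : Set X} (hU : IsOpen U) (hne : U.Nonempty)
    {v : X} (hv : v ≠ 0) {F : Set X} (hF : F.Finite) :
    ∃ u ∈ U, u ∉ F := by
  obtain ⟨u₀, hu₀⟩ := hne
  set g : ℝ → X := fun t => u₀ + t • v with hg
  have hgc : Continuous g := by
    apply Continuous.add continuous_const
    exact continuous_id.smul continuous_const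
  have hginj : Function.Injective g := by
    intro s t hst
    have h1 : s • v = t • v := by
      have := hst
      simp only [hg, add_right_inj] at this
      exact this
    by_contra hne'
    apply hv
    have h0 : (s - t) • v = 0 := by rw [sub_smul, h1, sub_self]
    have h2 : (s - t)⁻¹ • ((s - t) • v) = 0 := by rw [h0, smul_zero]
    rwa [smul_smul, inv_mul_cancel₀ (sub_ne_zero.mpr hne'), one_smul] at h2
  have hSopen : IsOpen (g ⁻¹' U) := hU.preimage hgc
  have hS0 : (0 : ℝ) ∈ g ⁻¹' U := by
    simp only [Set.mem_preimage, hg, zero_smul, add_zero]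
    exact hu₀
  have hSinf : (g ⁻¹' U).Infinite := by
    obtain ⟨ε, hε, hball⟩ := Metric.isOpen_iff.mp hSopen 0 hS0
    have hIoo : Set.Ioo (0 - ε) (0 + ε) ⊆ g ⁻¹' U := by
      rw [← Real.ball_eq_Ioo]; exact hball
    exact (Set.Ioo_infinite (by linarith)).mono hIoo
  have hTfin : (g ⁻¹' F).Finite := hF.preimage hginj.injOn
  obtain ⟨t, htS, htT⟩ := (hSinf.diff hTfin).nonempty
  exact ⟨g t, htS, htT⟩

/-- if `(T_a)` is a strongly continuous, locally separating operator
group on a separable F-space and the family `(T_{λ_n a})_{a ∈ K}` has a common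
hypercyclic vector, then `K` admits the stated coverings. -/
theorem stmt_16 {X : Type*} [AddCommGroup X] [Module ℝ X] [MetricSpace X]
    [CompleteSpace X] [TopologicalSpace.SeparableSpace X]
    [IsTopologicalAddGroup X] [ContinuousSMul ℝ X]
    (hinv : ∀ x y z : X, dist (x + z) (y + z) = dist x y)
    {d : ℕ} (T : EuclideanSpace ℝ (Fin d) → X →L[ℝ] X)
    (hid : T 0 = ContinuousLinearMap.id ℝ X)
    (hadd : ∀ a b, T (a + b) = (T a).comp (T b))
    (hsc : ∀ x : X, Continuous fun a => T a x)
    (hsep : ∀ A δ : ℝ, 0 < δ → δ < A → ∃ U : Set X, IsOpen U ∧ U.Nonempty ∧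
      ∀ a : EuclideanSpace ℝ (Fin d), δ ≤ ‖a‖ → ‖a‖ ≤ A →
        ∀ f ∈ U, T a f ∉ U)
    (K : Set (EuclideanSpace ℝ (Fin d))) (hK : IsCompact K)
    (hK0 : (0 : EuclideanSpace ℝ (Fin d)) ∉ K)
    (lam : ℕ → ℝ) (hpos : ∀ n, 0 < lam n) (hmono : StrictMono lam)
    (htop : Filter.Tendsto lam Filter.atTop Filter.atTop)
    (hHC : (⋂ a ∈ K,
      {x : X | Dense (Set.range fun n : ℕ => T (lam n • a) x)}).Nonempty) :
    ∀ A δ : ℝ, 0 < δ → δ < A → ∀ N : ℕ,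
      ∃ M : ℕ, N ≤ M ∧ ∃ q : ℕ → ℕ, ∃ y : ℕ → ℕ → EuclideanSpace ℝ (Fin d),
        (∀ n k, N ≤ n → n ≤ M → 1 ≤ k → k ≤ q n → y n k ∈ K) ∧
        (∀ n m k j, N ≤ n → n ≤ M → N ≤ m → m ≤ M → 1 ≤ k → k ≤ q n →
          1 ≤ j → j ≤ q m →
          ‖lam n • y n k - lam m • y m j‖ < δ ∨
            A < ‖lam n • y n k - lam m • y m j‖) ∧
        (∀ x ∈ K, ∃ n k, N ≤ n ∧ n ≤ M ∧ 1 ≤ k ∧ k ≤ q n ∧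
          x ∈ Metric.ball (y n k) (δ / lam n)) := by
  intro A δ hδ hδA N
  rcases K.eq_empty_or_nonempty with hKe | ⟨a₀, ha₀⟩
  · refine ⟨N, le_refl N, fun _ => 0, fun _ _ => 0, ?_, ?_, ?_⟩
    · intro n k _ _ hk1 hk2
      have h0 : k ≤ 0 := hk2
      omega
    · intro n m k j _ _ _ _ hk1 hk2 _ _
      have h0 : k ≤ 0 := hk2
      omega
    · intro x hx; rw [hKe] at hx; exact absurd hx (Set.notMem_empty x)
  · obtain ⟨U, hUo, hUne, hUsep⟩ := hsep A δ hδ hδA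
    have ha0ne : a₀ ≠ 0 := fun h => hK0 (h ▸ ha₀)
    -- X is nontrivial
    have hvex : ∃ v : X, v ≠ 0 := by
      by_contra h; push_neg at h
      obtain ⟨f, hf⟩ := hUne
      have hb : ‖(δ / ‖a₀‖) • a₀‖ = δ := by
        rw [norm_smul, Real.norm_eq_abs, abs_div, abs_of_pos hδ,
          abs_of_pos (norm_pos_iff.mpr ha0ne)]
        exact div_mul_cancel₀ δ (norm_ne_zero_iff.mpr ha0ne)
      refine hUsep _ hb.ge (hb.le.trans hδA.le) f hf ?_
      have heq : T ((δ / ‖a₀‖) • a₀) f = f := (h _).trans (h f).symm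
      rwa [heq]
    obtain ⟨v, hv⟩ := hvex
    obtain ⟨x, hx⟩ := hHC
    simp only [Set.mem_iInter, Set.mem_setOf_eq] at hx
    -- For each a ∈ K, pick n ≥ N with T (lam n • a) x ∈ U
    have key : ∀ a : K, ∃ n, N ≤ n ∧
        T (lam n • (a : EuclideanSpace ℝ (Fin d))) x ∈ U := by
      intro a
      have hd := hx (a : EuclideanSpace ℝ (Fin d)) a.2
      set F : Set X := (fun m : ℕ => T (lam m • (a : EuclideanSpace ℝ (Fin d))) x) ''
        (Set.Iio N) with hF
      have hFfin : F.Finite := (Set.finite_Iio N).image _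
      obtain ⟨u, huU, huF⟩ := aux_open_sub_finite hUo hUne hv hFfin
      have hUF : IsOpen (U \ F) := hUo.sdiff hFfin.isClosed
      obtain ⟨w, hwr, hwm⟩ := hd.exists_mem_open hUF ⟨u, huU, huF⟩
      obtain ⟨n, rfl⟩ := hwr
      refine ⟨n, ?_, hwm.1⟩
      by_contra hn
      exact hwm.2 ⟨n, Set.mem_Iio.mpr (by omega), rfl⟩
    choose nf hnfN hnfU using key
    -- finite subcover
    have hcov : K ⊆ ⋃ a : K, Metric.ball (a : EuclideanSpace ℝ (Fin d)) (δ / lam (nf a)) := by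
      intro b hb
      exact Set.mem_iUnion.mpr ⟨⟨b, hb⟩, by
        simpa [Metric.mem_ball] using div_pos hδ (hpos _)⟩
    obtain ⟨t, ht⟩ := hK.elim_finite_subcover
      (fun a : K => Metric.ball (a : EuclideanSpace ℝ (Fin d)) (δ / lam (nf a)))
      (fun a => Metric.isOpen_ball) hcov
    classical
    set M := max N (t.sup fun a => nf a) with hM
    set L : ℕ → List K := fun n => (t.filter (fun a => nf a = n)).toList with hL
    refine ⟨M, le_max_left _ _, fun n => (L n).length,
      fun n k => (((L n).getD (k-1) ⟨a₀, ha₀⟩ : K) : EuclideanSpace ℝ (Fin d)),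
      ?_, ?_, ?_⟩
    · intro n k _ _ _ _
      exact (((L n).getD (k-1) ⟨a₀, ha₀⟩ : K)).2
    · -- separation
      have helem : ∀ n k, 1 ≤ k → k ≤ (L n).length →
          ((L n).getD (k-1) ⟨a₀, ha₀⟩) ∈ t.filter (fun a => nf a = n) := by
        intro n k hk1 hk2
        have hlen : k - 1 < (L n).length := by omega
        rw [List.getD_eq_getElem _ _ hlen]
        exact Finset.mem_toList.mp (List.getElem_mem hlen)
      intro n m k j _ _ _ _ hk1 hk2 hj1 hj2
      set ea := (L n).getD (k-1) ⟨a₀, ha₀⟩ with hea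
      set eb := (L m).getD (j-1) ⟨a₀, ha₀⟩ with heb
      obtain ⟨_, hna⟩ := Finset.mem_filter.mp (helem n k hk1 hk2)
      obtain ⟨_, hnb⟩ := Finset.mem_filter.mp (helem m j hj1 hj2)
      by_contra hcon
      push_neg at hcon
      obtain ⟨h1, h2⟩ := hcon
      have hUa : T (lam n • (ea : EuclideanSpace ℝ (Fin d))) x ∈ U := by
        rw [← hna]; exact hnfU ea
      have hUb : T (lam m • (eb : EuclideanSpace ℝ (Fin d))) x ∈ U := by
        rw [← hnb]; exact hnfU eb
      refine hUsep _ (not_lt.mp (by simpa using h1)) h2 _ hUb ?_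
      have heq : T (lam n • (ea : EuclideanSpace ℝ (Fin d)) -
          lam m • (eb : EuclideanSpace ℝ (Fin d)))
          (T (lam m • (eb : EuclideanSpace ℝ (Fin d))) x) =
          T (lam n • (ea : EuclideanSpace ℝ (Fin d))) x := by
        rw [← ContinuousLinearMap.comp_apply, ← hadd, sub_add_cancel]
      rw [heq]; exact hUa
    · -- covering
      intro b hb
      obtain ⟨a, hat, hball⟩ := Set.mem_iUnion₂.mp (ht hb)
      set n := nf a with hn
      have hamem : a ∈ t.filter (fun a' => nf a' = n) := Finset.mem_filter.mpr ⟨hat, rfl⟩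
      have hamemL : a ∈ L n := Finset.mem_toList.mpr hamem
      obtain ⟨i, hi, hgi⟩ := List.mem_iff_getElem.mp hamemL
      have hnM : n ≤ M := le_trans (Finset.le_sup hat) (le_max_right _ _)
      have hkq : i + 1 ≤ (L n).length := by omega
      refine ⟨n, i + 1, hnfN a, hnM, by omega, hkq, ?_⟩
      · have heq : (L n).getD (i + 1 - 1) ⟨a₀, ha₀⟩ = a := by
          have h' : i + 1 - 1 < (L n).length := by omega
          rw [List.getD_eq_getElem _ _ h']
          simpa using hgi
        show b ∈ Metric.ball (((L n).getD (i + 1 - 1) ⟨a₀, ha₀⟩ : K) :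
          EuclideanSpace ℝ (Fin d)) (δ / lam n)
        rw [heq]
        exact hball
end

section
/- Let (λ_n) be an increasing sequence of positive real numbers satisfying property (FHCSG). Then for any d ≥ 1, any δ > 0 and any B > 0, there exists q > 0 such that for any N ∈ ℕ there exist finitely many elements (x_{n,k})_{N ≤ n ≤ N+q−1, 1 ≤ k ≤ p_n} of the Euclidean unit sphere S^{d−1} of ℝ^d such that: (A) S^{d−1} ⊆ ⋃_{n=N}^{N+q−1} ⋃_{k=1}^{p_n} B(x_{n,k}, δ/λ_n); and (B) for all admissible (n,k) ≠ (m,j), ‖λ_n x_{n,k} − λ_m x_{m,j}‖ ≥ B. -/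
open Metric Finset
open scoped NNReal

/-!
By (FHCSG), past any `N` there is a window `[a, a + L]` on which `lam` less than doubles:
otherwise `∑ 1 / lam n` would be dominated by a geometric series. Take a maximal
`δ / (2 lam a)`-separated net of the sphere. Rescaling by `2 lam a / δ` and packing in a fixed
ball shows that each net point has at most `T` net points within `B / lam a`, with `T`
independent of `a`, so the net splits greedily into `T` classes that are `B / lam a`-separated.
Class `k` is placed at level `a + ⌈B⌉₊ k`. Within a level, dilation by `lam n ≥ lam a` makes the
points `B`-separated; across levels, the gap condition gives `|lam n - lam m| ≥ ⌈B⌉₊ ≥ B`, which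
separates the dilated unit vectors. Since `n ≤ a + L`, `lam n < 2 lam a`, and the net still covers
the sphere at radius `δ / lam n`.
-/

namespace Metric

variable {X : Type*} [PseudoEMetricSpace X] {K : Set X} {ε : ℝ≥0}

theorem packingNumber_ne_top_of_isCompact (hK : IsCompact K) (hε : ε ≠ 0) :
    packingNumber ε K ≠ ⊤ := by
  obtain ⟨N, -, hNfin, hN⟩ := exists_finite_isCover_of_isCompact (ε := ε / 2) (by simpa using hε) hK
  refine ne_top_of_le_ne_top hNfin.encard_lt_top.ne ?_
  calc packingNumber ε K = packingNumber (2 * (ε / 2)) K := by rw [mul_div_cancel₀ _ two_ne_zero]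
    _ ≤ externalCoveringNumber (ε / 2) K := packingNumber_two_mul_le_externalCoveringNumber _ _
    _ ≤ N.encard := hN.externalCoveringNumber_le_encard

theorem exists_finset_isSeparated_isCover (hK : IsCompact K) (hε : ε ≠ 0) :
    ∃ G : Finset X, ↑G ⊆ K ∧ IsSeparated ε (G : Set X) ∧ IsCover ε K G := by
  have h := packingNumber_ne_top_of_isCompact hK hε
  have hfin : (maximalSeparatedSet ε K).Finite := by
    rw [← Set.encard_ne_top_iff, encard_maximalSeparatedSet h]
    exact h
  exact ⟨hfin.toFinset, by simpa using maximalSeparatedSet_subset,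
    by simpa using isSeparated_maximalSeparatedSet, by simpa using isCover_maximalSeparatedSet h⟩

end Metric

theorem Finset.exists_coloring_of_card_filter_lt {α : Type*} [DecidableEq α] (r : α → α → Prop)
    [DecidableRel r] (hr : ∀ x y, r x y → r y x) {T : ℕ} (s : Finset α)
    (hs : ∀ x ∈ s, #{y ∈ s | y ≠ x ∧ r x y} < T) :
    ∃ c : α → ℕ, (∀ x ∈ s, c x < T) ∧ ∀ x ∈ s, ∀ y ∈ s, x ≠ y → r x y → c x ≠ c y := by
  induction s using Finset.induction_on with
  | empty => exact ⟨fun _ => 0, by simp, by simp⟩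
  | insert a t ha ih =>
    obtain ⟨c, hcT, hc⟩ := ih fun x hx => (card_le_card (filter_subset_filter _
      (subset_insert a t))).trans_lt (hs x (mem_insert_of_mem hx))
    have hfree : #({y ∈ t | y ≠ a ∧ r a y}.image c) < #(range T) := by
      refine card_image_le.trans_lt ?_
      simpa [filter_insert] using hs a (mem_insert_self a t)
    obtain ⟨k, hkT, hk⟩ := exists_mem_notMem_of_card_lt_card hfree
    have hne : ∀ y ∈ t, r a y → Function.update c a k y ≠ k := fun y hy hay => by
      have hya := ne_of_mem_of_not_mem hy ha
      rw [Function.update_of_ne hya]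
      exact fun h => hk (mem_image.2 ⟨y, mem_filter.2 ⟨hy, hya, hay⟩, h⟩)
    refine ⟨Function.update c a k, fun x hx => ?_, fun x hx y hy hxy hrxy => ?_⟩
    · rcases mem_insert.1 hx with rfl | hxt
      · simpa using hkT
      · rw [Function.update_of_ne (ne_of_mem_of_not_mem hxt ha)]
        exact hcT x hxt
    · rcases mem_insert.1 hx with rfl | hxt <;> rcases mem_insert.1 hy with rfl | hyt
      · exact absurd rfl hxy
      · simpa using (hne y hyt hrxy).symm
      · simpa using hne x hxt (hr _ _ hrxy)
      · rw [Function.update_of_ne (ne_of_mem_of_not_mem hxt ha),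
          Function.update_of_ne (ne_of_mem_of_not_mem hyt ha)]
        exact hc x hxt y hyt hxy hrxy

theorem Finset.exists_bijOn_Icc {α : Type*} [Nonempty α] (s : Finset α) :
    ∃ e : ℕ → α, Set.BijOn e (Set.Icc 1 #s) s := by
  apply (Set.finite_Icc 1 #s).exists_bijOn_of_encard_eq
  rw [← coe_Icc, Set.encard_coe_eq_coe_finsetCard, Set.encard_coe_eq_coe_finsetCard, Nat.card_Icc,
    Nat.add_sub_cancel]

section NormedSpace

variable {E : Type*} [NormedAddCommGroup E] [NormedSpace ℝ E]

theorem exists_encard_inter_ball_le_of_isSeparated [ProperSpace E] (R : ℝ) :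
    ∃ T : ℕ, ∀ ε : ℝ≥0, ε ≠ 0 → ∀ s : Set E, IsSeparated ε s → ∀ g : E,
      (s ∩ ball g (R * ε)).encard ≤ T := by
  refine ⟨(packingNumber 1 (closedBall (0 : E) R)).toNat, fun ε hε s hs g => ?_⟩
  set f : E → E := fun u => (ε : ℝ)⁻¹ • (u - g)
  have hε' : (0 : ℝ) < ε := NNReal.coe_pos.2 (pos_iff_ne_zero.2 hε)
  have hdist : ∀ u v, dist (f u) (f v) = (ε : ℝ)⁻¹ * dist u v := fun u v => by
    rw [dist_eq_norm, dist_eq_norm, ← smul_sub, sub_sub_sub_cancel_right, norm_smul,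
      Real.norm_of_nonneg (inv_nonneg.2 hε'.le)]
  have hanti : AntilipschitzWith ε f := AntilipschitzWith.of_le_mul_dist fun u v => by
    rw [hdist, ← mul_assoc, mul_inv_cancel₀ hε'.ne', one_mul]
  have hsep : IsSeparated 1 (f '' (s ∩ ball g (R * ε))) := by
    simpa [div_self hε] using
      (hs.subset Set.inter_subset_left).image_antilipschitz hanti (pos_iff_ne_zero.2 hε)
  have hmaps : f '' (s ∩ ball g (R * ε)) ⊆ closedBall 0 R := by
    rintro _ ⟨u, ⟨-, hu⟩, rfl⟩
    have hg : f g = 0 := by simp [f]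
    rw [mem_closedBall, ← hg, hdist, inv_mul_le_iff₀ hε', mul_comm]
    exact (mem_ball.1 hu).le
  rw [← hanti.injective.injOn.encard_image]
  calc _ ≤ packingNumber 1 (closedBall (0 : E) R) := hsep.encard_le_packingNumber hmaps
    _ = _ := (ENat.natCast_toNat
      (packingNumber_ne_top_of_isCompact (isCompact_closedBall 0 R) one_ne_zero)).symm

theorem exists_colored_net_of_isCompact [ProperSpace E] {K : Set E} (hK : IsCompact K) (R : ℝ) :
    ∃ T : ℕ, ∀ ε : ℝ, 0 < ε → ∃ G : Finset E, ∃ c : E → ℕ, ↑G ⊆ K ∧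
      (∀ y ∈ K, ∃ g ∈ G, dist y g ≤ ε) ∧ (∀ g ∈ G, c g < T) ∧
      ∀ g ∈ G, ∀ h ∈ G, g ≠ h → c g = c h → R * ε ≤ dist g h := by
  classical
  obtain ⟨T, hT⟩ := exists_encard_inter_ball_le_of_isSeparated (E := E) R
  refine ⟨T + 1, fun ε hε => ?_⟩
  have hε' : ε.toNNReal ≠ 0 := by simpa using hε
  obtain ⟨G, hGK, hGsep, hGcov⟩ := exists_finset_isSeparated_isCover hK hε'
  have hdeg : ∀ x ∈ G, #{y ∈ G | y ≠ x ∧ dist x y < R * ε} < T + 1 := fun x _ => by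
    have hball := hT _ hε' _ hGsep x
    rw [Real.coe_toNNReal _ hε.le] at hball
    have hcard : #{y ∈ G | dist x y < R * ε} ≤ T := by
      rw [← Nat.cast_le (α := ℕ∞), ← Set.encard_coe_eq_coe_finsetCard, coe_filter]
      refine (Set.encard_le_encard fun y hy => ?_).trans hball
      exact ⟨hy.1, mem_ball_comm.1 hy.2⟩
    exact Nat.lt_succ_of_le ((card_le_card fun y => by simp +contextual) |>.trans hcard)
  obtain ⟨c, hcT, hc⟩ := G.exists_coloring_of_card_filter_lt (fun x y => dist x y < R * ε)
    (fun x y h => by rwa [dist_comm]) hdeg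
  refine ⟨G, c, hGK, fun y hy => ?_, hcT,
    fun g hg h hh hgh hcgh => not_lt.1 fun hlt => hc g hg h hh hgh hlt hcgh⟩
  simpa [Real.coe_toNNReal _ hε.le] using hGcov.subset_iUnion_closedBall hy

theorem abs_sub_le_norm_smul_sub_smul {x y : E} (hx : ‖x‖ = 1) (hy : ‖y‖ = 1) {s t : ℝ}
    (hs : 0 ≤ s) (ht : 0 ≤ t) :
    |s - t| ≤ ‖s • x - t • y‖ := by
  simpa [norm_smul, hx, hy, abs_of_nonneg hs, abs_of_nonneg ht] using
    abs_norm_sub_norm_le (s • x) (t • y)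

end NormedSpace

theorem sum_range_le_of_two_mul_le {u : ℕ → ℝ} (hu0 : ∀ n, 0 ≤ u n) (hu : Antitone u)
    {a L W : ℕ} (hhalf : ∀ i < W, 2 * u (a + (L + i)) ≤ u (a + i)) :
    ∑ i ∈ range W, u (a + i) ≤ 2 * L * u a := by
  have hle : ∑ i ∈ range W, u (a + i) ≤ ∑ i ∈ range (L + W), u (a + i) :=
    sum_le_sum_of_subset_of_nonneg (range_subset_range.2 (by omega)) fun _ _ _ => hu0 _
  have hhead : ∑ i ∈ range L, u (a + i) ≤ L * u a := by
    simpa using sum_le_card_nsmul (range L) _ _ fun i _ => hu (Nat.le_add_right a i)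
  have htail : 2 * ∑ i ∈ range W, u (a + (L + i)) ≤ ∑ i ∈ range W, u (a + i) := by
    rw [mul_sum]
    exact sum_le_sum fun i hi => hhalf i (mem_range.1 hi)
  rw [sum_range_add] at hle
  linarith

section GapSequence

variable {E : Type*} [NormedAddCommGroup E] [NormedSpace ℝ E] {lam : ℕ → ℝ}

theorem add_le_apply_add_of_gap (hgap : ∀ n, 1 ≤ n → lam n + 1 ≤ lam (n + 1)) {n : ℕ}
    (hn : 1 ≤ n) (k : ℕ) : lam n + k ≤ lam (n + k) := by
  induction k with
  | zero => simp
  | succ k ih =>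
    have := hgap (n + k) (by omega)
    push_cast [← add_assoc]
    linarith

theorem exists_lt_two_mul_of_FHCSG (hpos : ∀ n, 0 < lam n) (hmono : Monotone lam)
    (hFHCSG : ∀ C : ℝ, 0 < C → ∃ p : ℕ, ∀ N : ℕ, 1 ≤ N →
      C / lam N ≤ ∑ n ∈ Finset.Icc (N + 1) (N + p), (lam n)⁻¹) (L : ℕ) :
    ∃ P : ℕ, ∀ N, 1 ≤ N → ∃ a, N < a ∧ a ≤ N + P ∧ lam (a + L) < 2 * lam a := by
  obtain ⟨P, hP⟩ := hFHCSG (2 * L + 1) (by positivity)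
  refine ⟨P, fun N hN => ?_⟩
  by_contra! hdouble
  have hsum : ∑ n ∈ Icc (N + 1) (N + P), (lam n)⁻¹ ≤ 2 * L * (lam (N + 1))⁻¹ := by
    rw [← Ico_add_one_right_eq_Icc, sum_Ico_eq_sum_range, show N + P + 1 - (N + 1) = P by omega]
    refine sum_range_le_of_two_mul_le (fun n => (inv_pos.2 (hpos n)).le)
      (fun m n hmn => inv_anti₀ (hpos m) (hmono hmn)) fun i hi => ?_
    have := hdouble (N + 1 + i) (by omega) (by omega)
    rw [show N + 1 + (L + i) = N + 1 + i + L by omega, ← div_eq_mul_inv, div_le_iff₀ (hpos _),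
      inv_mul_eq_div, le_div_iff₀ (hpos _)]
    exact this
  have hinv : (lam (N + 1))⁻¹ ≤ (lam N)⁻¹ := inv_anti₀ (hpos N) (hmono (Nat.le_succ N))
  have := (hP N hN).trans hsum
  rw [div_eq_mul_inv] at this
  nlinarith [inv_pos.2 (hpos N)]

theorem exists_separated_sphere_family (hpos : ∀ n, 0 < lam n) (hmono : Monotone lam)
    (hgap : ∀ n, 1 ≤ n → lam n + 1 ≤ lam (n + 1)) {δ B : ℝ} (hδ : 0 < δ) (hB : 0 < B)
    {a b T : ℕ} (ha : 1 ≤ a) (hb : B ≤ b) (hslow : lam (a + b * T) < 2 * lam a)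
    {G : Finset E} {c : E → ℕ} (hGS : ↑G ⊆ sphere (0 : E) 1)
    (hcov : ∀ y ∈ sphere (0 : E) 1, ∃ g ∈ G, dist y g ≤ δ / (2 * lam a))
    (hcT : ∀ g ∈ G, c g < T) (hsep : ∀ g ∈ G, ∀ h ∈ G, g ≠ h → c g = c h → B / lam a ≤ dist g h) :
    ∃ cls : ℕ → Finset E, (∀ n, ↑(cls n) ⊆ sphere (0 : E) 1) ∧
      (∀ y ∈ sphere (0 : E) 1, ∃ n, a ≤ n ∧ n ≤ a + b * T ∧ ∃ g ∈ cls n, dist y g < δ / lam n) ∧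
      ∀ n m g h, g ∈ cls n → h ∈ cls m → (n, g) ≠ (m, h) → B ≤ ‖lam n • g - lam m • h‖ := by
  classical
  refine ⟨fun n => {g ∈ G | a + b * c g = n}, fun n g hg => hGS (mem_filter.1 hg).1, ?_, ?_⟩
  · intro y hy
    obtain ⟨g, hg, hyg⟩ := hcov y hy
    have hn : a + b * c g ≤ a + b * T := by gcongr; exact (hcT g hg).le
    refine ⟨a + b * c g, by omega, hn, g, by simp [hg], hyg.trans_lt
      (div_lt_div_of_pos_left hδ (hpos _) ((hmono hn).trans_lt hslow))⟩
  · have hb0 : 0 < b := by exact_mod_cast hB.trans_le hb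
    have hcross : ∀ n m g h, g ∈ G → h ∈ G → a + b * c g = n → a + b * c h = m → n < m →
        lam n + B ≤ lam m := by
      rintro n m g h - - rfl rfl hnm
      have hc : c g + 1 ≤ c h := Nat.lt_of_mul_lt_mul_left (a := b) (by omega)
      have hm : a + b * c g + b ≤ a + b * c h := by nlinarith
      have := add_le_apply_add_of_gap hgap (n := a + b * c g) (by omega) b
      linarith [hmono hm]
    rintro n m g h hg hh hne
    simp only [mem_filter] at hg hh
    have hg1 : ‖g‖ = 1 := by simpa using hGS hg.1
    have hh1 : ‖h‖ = 1 := by simpa using hGS hh.1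
    rcases lt_trichotomy n m with hnm | rfl | hnm
    · have := hcross n m g h hg.1 hh.1 hg.2 hh.2 hnm
      refine le_trans ?_ (abs_sub_le_norm_smul_sub_smul hg1 hh1 (hpos n).le (hpos m).le)
      rw [abs_sub_comm]
      exact le_abs.2 (Or.inl (by linarith))
    · have hgh : g ≠ h := fun hgh => hne (by rw [hgh])
      have hcgh : c g = c h := Nat.eq_of_mul_eq_mul_left hb0 (by omega)
      calc B = lam a * (B / lam a) := by field_simp [(hpos a).ne']
        _ ≤ lam n * dist g h :=
          mul_le_mul (hmono (by omega)) (hsep g hg.1 h hh.1 hgh hcgh) (div_pos hB (hpos a)).le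
            (hpos n).le
        _ = ‖lam n • g - lam n • h‖ := by
          rw [← smul_sub, norm_smul, Real.norm_of_nonneg (hpos n).le, dist_eq_norm]
    · have := hcross m n h g hh.1 hg.1 hh.2 hg.2 hnm
      refine le_trans ?_ (abs_sub_le_norm_smul_sub_smul hg1 hh1 (hpos n).le (hpos m).le)
      exact le_abs.2 (Or.inl (by linarith))

end GapSequence

/-- a sequence with property (FHCSG) yields, for each `d ≥ 1`, `δ > 0`
and `B > 0`, coverings of the unit sphere `S^{d-1}` of controlled size `q` starting at
any index `N`, with `B`-separation of the dilated centers. -/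
theorem stmt_18 (lam : ℕ → ℝ) (hpos : ∀ n, 0 < lam n) (hmono : StrictMono lam)
    (hgap : ∀ n, 1 ≤ n → lam n + 1 ≤ lam (n + 1))
    (hFHCSG : ∀ C : ℝ, 0 < C → ∃ p : ℕ, ∀ N : ℕ, 1 ≤ N →
      C / lam N ≤ ∑ n ∈ Finset.Icc (N + 1) (N + p), (lam n)⁻¹) :
    ∀ d : ℕ, 1 ≤ d → ∀ δ : ℝ, 0 < δ → ∀ B : ℝ, 0 < B →
      ∃ q : ℕ, 0 < q ∧ ∀ N : ℕ,
        ∃ p : ℕ → ℕ, ∃ x : ℕ → ℕ → EuclideanSpace ℝ (Fin d),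
          (∀ n k, N ≤ n → n ≤ N + q - 1 → 1 ≤ k → k ≤ p n → ‖x n k‖ = 1) ∧
          (∀ y : EuclideanSpace ℝ (Fin d), ‖y‖ = 1 →
            ∃ n k, N ≤ n ∧ n ≤ N + q - 1 ∧ 1 ≤ k ∧ k ≤ p n ∧
              y ∈ Metric.ball (x n k) (δ / lam n)) ∧
          (∀ n m k j, N ≤ n → n ≤ N + q - 1 → N ≤ m → m ≤ N + q - 1 →
            1 ≤ k → k ≤ p n → 1 ≤ j → j ≤ p m → (n, k) ≠ (m, j) →
            B ≤ ‖lam n • x n k - lam m • x m j‖) := by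
  intro d _ δ hδ B hB
  obtain ⟨T, hT⟩ :=
    exists_colored_net_of_isCompact (isCompact_sphere (0 : EuclideanSpace ℝ (Fin d)) 1) (2 * B / δ)
  obtain ⟨P, hP⟩ := exists_lt_two_mul_of_FHCSG hpos hmono.monotone hFHCSG (⌈B⌉₊ * T)
  refine ⟨P + ⌈B⌉₊ * T + 2, by omega, fun N => ?_⟩
  obtain ⟨a, hNa, haP, hslow⟩ := hP (N + 1) (by omega)
  obtain ⟨G, c, hGS, hcov, hcT, hsep⟩ := hT (δ / (2 * lam a)) (by have := hpos a; positivity)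
  have hscale : 2 * B / δ * (δ / (2 * lam a)) = B / lam a := by
    field_simp [hδ.ne', (hpos a).ne']
  obtain ⟨cls, hclsS, hclscov, hclssep⟩ := exists_separated_sphere_family hpos hmono.monotone hgap
    hδ hB (by omega) (Nat.le_ceil B) hslow hGS hcov hcT (by simpa only [hscale] using hsep)
  choose x hx using fun n => (cls n).exists_bijOn_Icc
  refine ⟨fun n => #(cls n), x, fun n k _ _ hk1 hk2 => ?_, fun y hy => ?_, ?_⟩
  · simpa using hclsS n ((hx n).mapsTo ⟨hk1, hk2⟩)
  · obtain ⟨n, han, hnL, g, hg, hyg⟩ := hclscov y (by simpa using hy)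
    obtain ⟨k, hk, rfl⟩ := (hx n).surjOn hg
    exact ⟨n, k, by omega, by omega, hk.1, hk.2, hyg⟩
  · intro n m k j _ _ _ _ hk1 hk2 hj1 hj2 hne
    refine hclssep n m _ _ ((hx n).mapsTo ⟨hk1, hk2⟩) ((hx m).mapsTo ⟨hj1, hj2⟩) fun heq => ?_
    obtain ⟨rfl, hxe⟩ := Prod.mk.inj heq
    exact hne (by rw [(hx n).injOn ⟨hk1, hk2⟩ ⟨hj1, hj2⟩ hxe])
end

section
/- Let X be a separable F-space admitting a nonzero continuous linear functional, let T be a continuous linear operator on X, and let Λ be an uncountable subset of (0, +∞). Then the set of common frequently hypercyclic vectors for the family (λT)_{λ∈Λ} is empty, i.e., ⋂_{λ∈Λ} FHC(λT) = ∅. -/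
set_option maxHeartbeats 1000000
set_option synthInstance.maxHeartbeats 400000


/-- The lower density of a set of natural numbers. -/
noncomputable def lowerDensity (A : Set ℕ) : ℝ :=
  Filter.liminf
    (fun N : ℕ => (Nat.card (A ∩ Set.Iic N : Set ℕ) : ℝ) / (N : ℝ)) Filter.atTop

lemma auxFin (c : ℕ → ℝ) {l m : ℝ} (hl : 0 < l) (hlm : l < m) :
    ({n : ℕ | l ^ n * c n ∈ Set.Ioo (1:ℝ) 2} ∩
      {n : ℕ | m ^ n * c n ∈ Set.Ioo (1:ℝ) 2}).Finite := by
  set r := m / l with hrdef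
  have hr : 1 < r := (one_lt_div hl).2 hlm
  apply Set.Finite.subset (Set.finite_Iio (⌈1 / (r - 1)⌉₊ + 1))
  rintro n ⟨⟨h1, h2⟩, ⟨h3, h4⟩⟩
  have hlp : 0 < l ^ n := pow_pos hl n
  have hmp : 0 < m ^ n := pow_pos (hl.trans hlm) n
  have hc : 0 < c n := by nlinarith
  have key : r ^ n < 2 := by
    rw [hrdef, div_pow, div_lt_iff₀ hlp]
    nlinarith
  have bern : 1 + (n : ℝ) * (r - 1) ≤ r ^ n := by
    have h := one_add_mul_le_pow (a := r - 1) (by linarith) n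
    rwa [show (1:ℝ) + (r - 1) = r by ring] at h
  have hn : (n : ℝ) < 1 / (r - 1) := by
    rw [lt_div_iff₀ (by linarith)]
    nlinarith
  exact Set.mem_Iio.2 (Nat.lt_succ_of_lt (Nat.lt_ceil.2 hn))

/-- for a continuous linear operator `T` on a separable F-space `X`
admitting a nonzero continuous linear functional, and an uncountable set
`Λ ⊆ (0, ∞)`, there is no common frequently hypercyclic vector for `(λT)_{λ∈Λ}`. -/
theorem stmt_19 {X : Type*} [AddCommGroup X] [Module ℝ X] [MetricSpace X]
    [CompleteSpace X] [TopologicalSpace.SeparableSpace X]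
    [IsTopologicalAddGroup X] [ContinuousSMul ℝ X]
    (hinv : ∀ x y z : X, dist (x + z) (y + z) = dist x y)
    (hfunc : ∃ φ : X →L[ℝ] ℝ, φ ≠ 0)
    (T : X →L[ℝ] X) (Λ : Set ℝ) (hΛ : Λ ⊆ Set.Ioi 0)
    (hunc : ¬ Λ.Countable) :
    (⋂ l ∈ Λ, {x : X | ∀ U : Set X, IsOpen U → U.Nonempty →
      0 < lowerDensity {n : ℕ | ((l • T) ^ n) x ∈ U}}) = ∅ := by
  classical
  rw [Set.eq_empty_iff_forall_notMem]
  intro x hx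
  simp only [Set.mem_iInter, Set.mem_setOf_eq] at hx
  obtain ⟨φ, hφ⟩ := hfunc
  obtain ⟨v, hv⟩ : ∃ v, φ v ≠ 0 := by
    by_contra h; push_neg at h
    exact hφ (ContinuousLinearMap.ext fun v => by simp [h v])
  set U : Set X := φ ⁻¹' Set.Ioo 1 2 with hU
  have hUopen : IsOpen U := isOpen_Ioo.preimage φ.continuous
  have hUne : U.Nonempty := by
    refine ⟨(3 / (2 * φ v)) • v, ?_⟩
    have hφval : φ ((3 / (2 * φ v)) • v) = 3 / 2 := by
      rw [map_smul, smul_eq_mul]; field_simp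
    simp only [hU, Set.mem_preimage, hφval, Set.mem_Ioo]
    norm_num
  set c : ℕ → ℝ := fun n => φ ((T ^ n) x) with hcdef
  set A : ℝ → Set ℕ := fun l => {n | l ^ n * c n ∈ Set.Ioo (1:ℝ) 2} with hAdef
  have hAeq : ∀ l : ℝ, {n : ℕ | ((l • T) ^ n) x ∈ U} = A l := by
    intro l; ext n
    simp only [Set.mem_setOf_eq, hAdef, hU, Set.mem_preimage, smul_pow,
      ContinuousLinearMap.smul_apply, map_smul, smul_eq_mul, hcdef]
  have hd : ∀ l ∈ Λ, 0 < lowerDensity (A l) := fun l hl =>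
    hAeq l ▸ hx l hl U hUopen hUne
  -- pigeonhole on density thresholds
  have hcover : Λ ⊆ ⋃ k : ℕ, {l ∈ Λ | 1 / ((k : ℝ) + 1) < lowerDensity (A l)} := by
    intro l hl
    obtain ⟨k, hk⟩ := exists_nat_one_div_lt (hd l hl)
    exact Set.mem_iUnion.2 ⟨k, hl, hk⟩
  obtain ⟨k, hk⟩ : ∃ k : ℕ, ¬ {l ∈ Λ | 1 / ((k : ℝ) + 1) < lowerDensity (A l)}.Countable := by
    by_contra h; push_neg at h
    exact hunc ((Set.countable_iUnion h).mono hcover)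
  have hinf : {l ∈ Λ | 1 / ((k : ℝ) + 1) < lowerDensity (A l)}.Infinite :=
    fun hfin => hk hfin.countable
  obtain ⟨t, hts, htcard⟩ := hinf.exists_subset_card_eq (k + 2)
  have htpos : ∀ l ∈ t, 0 < l := fun l hl => Set.mem_Ioi.mp (hΛ (hts hl).1)
  have hpair : ∀ l ∈ t, ∀ m ∈ t, l ≠ m → (A l ∩ A m).Finite := by
    intro l hl m hm hne
    rcases hne.lt_or_gt with h | h
    · exact auxFin c (htpos l hl) h
    · rw [Set.inter_comm]; exact auxFin c (htpos m hm) h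
  set P : Finset (ℝ × ℝ) := (t ×ˢ t).filter (fun p => p.1 ≠ p.2) with hPdef
  have hBfin : (⋃ p ∈ (↑P : Set (ℝ × ℝ)), A p.1 ∩ A p.2).Finite := by
    refine Set.Finite.biUnion P.finite_toSet (fun p hp => ?_)
    rw [Finset.mem_coe, hPdef, Finset.mem_filter, Finset.mem_product] at hp
    exact hpair p.1 hp.1.1 p.2 hp.1.2 hp.2
  set Bf : Finset ℕ := hBfin.toFinset with hBfdef
  -- eventual lower bound on counts
  have hev : ∀ l ∈ t, ∀ᶠ N : ℕ in Filter.atTop,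
      1 / ((k : ℝ) + 1) < (Nat.card (A l ∩ Set.Iic N : Set ℕ) : ℝ) / (N : ℝ) := by
    intro l hl
    have hld : 1 / ((k : ℝ) + 1) < lowerDensity (A l) := (hts hl).2
    rw [lowerDensity] at hld
    refine Filter.eventually_lt_of_lt_liminf hld ?_
    exact Filter.isBoundedUnder_of ⟨0, fun N => by positivity⟩
  have hev2 : ∀ᶠ N : ℕ in Filter.atTop, ∀ l ∈ t,
      1 / ((k : ℝ) + 1) < (Nat.card (A l ∩ Set.Iic N : Set ℕ) : ℝ) / (N : ℝ) :=
    (Filter.eventually_all_finset t).2 hev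
  obtain ⟨N₀, hN₀⟩ := Filter.eventually_atTop.mp hev2
  set N : ℕ := max N₀ (max 1 ((k + 1) * (k + 2) * Bf.card + (k + 2))) with hNdef
  have hNpos : (0 : ℝ) < (N : ℝ) := by
    have : 1 ≤ N := le_trans (le_max_left _ _) (le_max_right _ _)
    exact_mod_cast this
  set F : ℝ → Finset ℕ := fun l => (Finset.Iic N).filter (· ∈ A l) with hFdef
  have hcard : ∀ l : ℝ, Nat.card (A l ∩ Set.Iic N : Set ℕ) = (F l).card := by
    intro l
    have hset : A l ∩ Set.Iic N = ↑(F l) := by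
      ext n
      simp [hFdef, hAdef, Set.mem_Ioo, Set.mem_inter_iff, and_comm]
    rw [hset, Nat.card_coe_set_eq, Set.ncard_coe_finset]
  -- per-element lower bound at N
  have h1 : ∀ l ∈ t, (N : ℝ) < ((k : ℝ) + 1) * ((F l).card : ℝ) := by
    intro l hl
    have h := hN₀ N (le_max_left _ _) l hl
    rw [hcard l, div_lt_div_iff₀ (by positivity) hNpos] at h
    linarith
  -- counting upper bound
  have hdisj : ∀ l ∈ t, ∀ m ∈ t, l ≠ m → Disjoint (F l \ Bf) (F m \ Bf) := by
    intro l hl m hm hne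
    rw [Finset.disjoint_left]
    intro n hn hn'
    rw [Finset.mem_sdiff, hFdef, Finset.mem_filter] at hn hn'
    apply hn.2
    rw [hBfdef, Set.Finite.mem_toFinset]
    refine Set.mem_biUnion (show (l, m) ∈ (↑P : Set (ℝ × ℝ)) from ?_) ⟨hn.1.2, hn'.1.2⟩
    rw [Finset.mem_coe, hPdef, Finset.mem_filter, Finset.mem_product]
    exact ⟨⟨hl, hm⟩, hne⟩
  have hsum : ∑ l ∈ t, (F l).card ≤ (k + 2) * Bf.card + (N + 1) := by
    calc ∑ l ∈ t, (F l).card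
        = ∑ l ∈ t, ((F l ∩ Bf).card + (F l \ Bf).card) :=
          Finset.sum_congr rfl fun l _ => (Finset.card_inter_add_card_sdiff _ _).symm
      _ = (∑ l ∈ t, (F l ∩ Bf).card) + ∑ l ∈ t, (F l \ Bf).card :=
          Finset.sum_add_distrib
      _ ≤ (k + 2) * Bf.card + (N + 1) := by
          refine add_le_add ?_ ?_
          · calc ∑ l ∈ t, (F l ∩ Bf).card
                ≤ ∑ _l ∈ t, Bf.card :=
                  Finset.sum_le_sum fun l _ => Finset.card_le_card Finset.inter_subset_right
              _ = (k + 2) * Bf.card := by rw [Finset.sum_const, htcard, smul_eq_mul]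
          · rw [← Finset.card_biUnion hdisj]
            calc (t.biUnion fun l => F l \ Bf).card
                ≤ (Finset.Iic N).card := by
                  refine Finset.card_le_card (Finset.biUnion_subset.2 fun l _ => ?_)
                  exact (Finset.sdiff_subset).trans (Finset.filter_subset _ _)
              _ = N + 1 := Nat.card_Iic N
  -- combine
  have htne : t.Nonempty := Finset.card_pos.mp (by rw [htcard]; omega)
  have h2 : ((k : ℝ) + 2) * (N : ℝ) < ((k : ℝ) + 1) * ∑ l ∈ t, ((F l).card : ℝ) := by
    calc ((k : ℝ) + 2) * (N : ℝ) = ∑ _l ∈ t, (N : ℝ) := by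
          rw [Finset.sum_const, htcard]; push_cast; ring
      _ < ∑ l ∈ t, ((k : ℝ) + 1) * ((F l).card : ℝ) :=
          Finset.sum_lt_sum_of_nonempty htne h1
      _ = ((k : ℝ) + 1) * ∑ l ∈ t, ((F l).card : ℝ) := (Finset.mul_sum _ _ _).symm
  have h3 : ∑ l ∈ t, ((F l).card : ℝ) ≤ ((k : ℝ) + 2) * (Bf.card : ℝ) + ((N : ℝ) + 1) := by
    have := hsum
    have hc : ((∑ l ∈ t, (F l).card : ℕ) : ℝ) ≤ (((k + 2) * Bf.card + (N + 1) : ℕ) : ℝ) :=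
      Nat.cast_le.2 this
    push_cast at hc
    convert hc using 2
  have hNbig : (((k + 1) * (k + 2) * Bf.card + (k + 2) : ℕ) : ℝ) ≤ (N : ℝ) :=
    Nat.cast_le.2 (le_trans (le_max_right 1 _) (le_max_right N₀ _))
  have h4 : ((k : ℝ) + 1) * (∑ l ∈ t, ((F l).card : ℝ)) ≤
      ((k : ℝ) + 1) * (((k : ℝ) + 2) * (Bf.card : ℝ) + ((N : ℝ) + 1)) :=
    mul_le_mul_of_nonneg_left h3 (by positivity)
  push_cast at hNbig
  nlinarith [h2, h4, hNbig]
end
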